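/- arXiv:2507.12929 — 7 statements merged into one kernel-verified Lean document; each statement's English description precedes it below -/
import Mathlib

section
/- Let n ≥ 1 be an integer and a, b ∈ ℂ satisfy 2^{2^n} − |a| > 2 and (2^{2^n} − |a|)² − |b| > 2. Define Q(z) = (z^{2^n} + a)² + b. Then Q^{-1}(D̄(0,2)) ⊆ D̄(0,2), where D̄(0,2) is the closed disc of radius 2 centered at 0. -/
/-! Outside the closed disc of radius 2 the map escapes: if `‖z‖ > 2` then the reverse
triangle inequality gives `‖z ^ 2 ^ n + a‖ ≥ 2 ^ 2 ^ n - ‖a‖ > 2`, and applying it once more,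
`‖Q z‖ ≥ (2 ^ 2 ^ n - ‖a‖) ^ 2 - ‖b‖ > 2`. -/

theorem pow_sub_norm_le_norm_pow_add {α : Type*} [SeminormedRing α] [NormOneClass α]
    [NormMulClass α] {z : α} {r : ℝ} (k : ℕ) (c : α) (hr : 0 ≤ r) (hrz : r ≤ ‖z‖) :
    r ^ k - ‖c‖ ≤ ‖z ^ k + c‖ :=
  calc r ^ k - ‖c‖ ≤ ‖z ^ k‖ - ‖c‖ := by
        rw [norm_pow]
        gcongr
    _ ≤ ‖z ^ k + c‖ := by linarith [norm_le_add_norm_add (z ^ k) c]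

theorem preimage_closedBall_subset_closedBall_general
    (n : ℕ) (a b : ℂ)
    (h1 : 2 < (2 : ℝ) ^ 2 ^ n - ‖a‖)
    (h2 : 2 < ((2 : ℝ) ^ 2 ^ n - ‖a‖) ^ 2 - ‖b‖) :
    (fun z : ℂ => (z ^ 2 ^ n + a) ^ 2 + b) ⁻¹' Metric.closedBall 0 2 ⊆
      Metric.closedBall 0 2 := by
  intro z hQz
  by_contra hz
  simp only [Set.mem_preimage, Metric.mem_closedBall, dist_zero_right, not_le] at hQz hz
  have hw := pow_sub_norm_le_norm_pow_add (2 ^ n) a zero_le_two hz.le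
  have hQ := pow_sub_norm_le_norm_pow_add 2 b (by linarith) hw
  linarith

/-- If `n ≥ 1` and `a, b ∈ ℂ` satisfy `2^{2^n} − |a| > 2` and `(2^{2^n} − |a|)² − |b| > 2`,
then the preimage of the closed disc `D̄(0,2)` under `Q(z) = (z^{2^n} + a)² + b` is
contained in `D̄(0,2)`. -/
theorem preimage_closedBall_subset_closedBall
    (n : ℕ) (hn : 1 ≤ n) (a b : ℂ)
    (h1 : 2 < (2 : ℝ) ^ 2 ^ n - ‖a‖)
    (h2 : 2 < ((2 : ℝ) ^ 2 ^ n - ‖a‖) ^ 2 - ‖b‖) :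
    (fun z : ℂ => (z ^ 2 ^ n + a) ^ 2 + b) ⁻¹' Metric.closedBall 0 2 ⊆
      Metric.closedBall 0 2 :=
  preimage_closedBall_subset_closedBall_general n a b h1 h2
end

section
/- For every integer n ≥ 1, every a ∈ ℂ, and every set X ⊆ ℂ of Euclidean diameter at most 4, every connected component of the preimage of X under the map z ↦ z^{2^n} + a has Euclidean diameter at most 4. -/
private lemma edist_le_four {x y : ℂ} (h : dist x y ≤ 4) : edist x y ≤ 4 := by
  rw [edist_dist]
  calc ENNReal.ofReal (dist x y) ≤ ENNReal.ofReal 4 := ENNReal.ofReal_le_ofReal h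
    _ = 4 := by norm_num

private lemma dist_le_four {x y : ℂ} (h : edist x y ≤ 4) : dist x y ≤ 4 := by
  rw [edist_dist, show (4 : ENNReal) = ENNReal.ofReal 4 by norm_num] at h
  exact (ENNReal.ofReal_le_ofReal_iff (by norm_num)).mp h

/-- Squaring step: a preconnected subset of the preimage of a diam-≤4 set under
`z ↦ z ^ 2` has diameter ≤ 4. -/
private lemma sq_step (Y : Set ℂ) (hY : EMetric.diam Y ≤ 4) (C : Set ℂ)
    (hC : IsPreconnected C) (hsub : ∀ z ∈ C, z ^ 2 ∈ Y) :
    EMetric.diam C ≤ 4 := by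
  have key : ∀ u ∈ C, ∀ v ∈ C, ‖u - v‖ * ‖u + v‖ ≤ 4 := by
    intro u hu v hv
    have h1 : edist (u ^ 2) (v ^ 2) ≤ 4 :=
      le_trans (EMetric.edist_le_diam_of_mem (hsub u hu) (hsub v hv)) hY
    have h2 : dist (u ^ 2) (v ^ 2) ≤ 4 := dist_le_four h1
    rw [dist_eq_norm] at h2
    calc ‖u - v‖ * ‖u + v‖ = ‖(u - v) * (u + v)‖ := (norm_mul _ _).symm
      _ = ‖u ^ 2 - v ^ 2‖ := by ring_nf
      _ ≤ 4 := h2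
  by_cases hbig : ∀ z ∈ C, ‖z‖ ≤ 2
  · refine EMetric.diam_le fun x hx y hy => edist_le_four ?_
    rw [dist_eq_norm]
    calc ‖x - y‖ ≤ ‖x‖ + ‖y‖ := norm_sub_le _ _
      _ ≤ 4 := by have := hbig x hx; have := hbig y hy; linarith
  · push_neg at hbig
    obtain ⟨z, hz, h2z⟩ := hbig
    have hcov : ∀ u ∈ C, dist u z ≤ 2 ∨ dist u (-z) ≤ 2 := by
      intro u hu
      have h := key u hu z hz
      by_contra hcon
      push_neg at hcon
      rw [dist_eq_norm] at hcon
      rw [dist_eq_norm, sub_neg_eq_add] at hcon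
      nlinarith [hcon.1, hcon.2, norm_nonneg (u - z), norm_nonneg (u + z)]
    set U := Metric.ball z ‖z‖ with hU
    set V := Metric.ball (-z) ‖z‖ with hV
    have hUV : ∀ u, u ∈ U → u ∈ V → False := by
      intro u h1 h2
      rw [Metric.mem_ball] at h1 h2
      have hd : dist z (-z) = 2 * ‖z‖ := by
        rw [dist_eq_norm, sub_neg_eq_add, show z + z = (2 : ℂ) * z by ring, norm_mul]
        norm_num
      have : dist z (-z) ≤ dist z u + dist u (-z) := dist_triangle _ _ _
      rw [dist_comm z u] at this
      linarith
    have hCU : C ⊆ U ∪ V := by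
      intro u hu
      rcases hcov u hu with h | h
      · exact Or.inl (Metric.mem_ball.mpr (lt_of_le_of_lt h h2z))
      · exact Or.inr (Metric.mem_ball.mpr (lt_of_le_of_lt h h2z))
    have hzU : z ∈ C ∩ U := ⟨hz, Metric.mem_ball_self (by linarith)⟩
    have hCV : ¬ (C ∩ V).Nonempty := by
      intro hne
      obtain ⟨u, hu, huU, huV⟩ := hC U V Metric.isOpen_ball Metric.isOpen_ball hCU ⟨z, hzU⟩ hne
      exact hUV u huU huV
    have hclose : ∀ u ∈ C, dist u z ≤ 2 := by
      intro u hu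
      rcases hcov u hu with h | h
      · exact h
      · exact absurd ⟨u, hu, Metric.mem_ball.mpr (lt_of_le_of_lt h h2z)⟩ hCV
    refine EMetric.diam_le fun x hx y hy => edist_le_four ?_
    calc dist x y ≤ dist x z + dist z y := dist_triangle _ _ _
      _ ≤ 2 + 2 := add_le_add (hclose x hx) (by rw [dist_comm]; exact hclose y hy)
      _ = 4 := by norm_num

private lemma main_step : ∀ (n : ℕ) (Y : Set ℂ), EMetric.diam Y ≤ 4 →
    ∀ C : Set ℂ, IsPreconnected C → (∀ z ∈ C, z ^ 2 ^ n ∈ Y) →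
    EMetric.diam C ≤ 4 := by
  intro n
  induction n with
  | zero =>
    intro Y hY C _ hsub
    exact le_trans (EMetric.diam_mono (fun z hz => by simpa using hsub z hz)) hY
  | succ n ih =>
    intro Y hY C hC hsub
    set D : Set ℂ := (fun z : ℂ => z ^ 2) '' C with hD
    have hDpre : IsPreconnected D := hC.image _ (continuous_pow 2).continuousOn
    have hDsub : ∀ w ∈ D, w ^ 2 ^ n ∈ Y := by
      rintro w ⟨z, hz, rfl⟩
      have : (z ^ 2) ^ 2 ^ n = z ^ 2 ^ (n + 1) := by
        rw [← pow_mul, ← pow_succ']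
      rw [this]
      exact hsub z hz
    have hDdiam : EMetric.diam D ≤ 4 := ih Y hY D hDpre hDsub
    exact sq_step D hDdiam C hC (fun z hz => Set.mem_image_of_mem _ hz)

/-- For every `n ≥ 1`, `a ∈ ℂ` and every set `X ⊆ ℂ` of Euclidean diameter at most `4`,
each connected component of the preimage of `X` under `z ↦ z^{2^n} + a` has Euclidean
diameter at most `4`. -/
theorem diam_component_preimage_pow_add_le_four
    (n : ℕ) (hn : 1 ≤ n) (a : ℂ) (X : Set ℂ) (hX : EMetric.diam X ≤ 4) :
    ∀ z ∈ (fun w : ℂ => w ^ 2 ^ n + a) ⁻¹' X,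
      EMetric.diam
        (connectedComponentIn ((fun w : ℂ => w ^ 2 ^ n + a) ⁻¹' X) z) ≤ 4 := by
  intro z hz
  set S := (fun w : ℂ => w ^ 2 ^ n + a) ⁻¹' X with hS
  set Y : Set ℂ := (fun w : ℂ => w + a) ⁻¹' X with hY
  have hYdiam : EMetric.diam Y ≤ 4 := by
    refine EMetric.diam_le fun x hx y hy => ?_
    have : edist (x + a) (y + a) ≤ 4 :=
      le_trans (EMetric.edist_le_diam_of_mem hx hy) hX
    simpa [edist_add_right] using this
  exact main_step n Y hYdiam _ (isPreconnected_connectedComponentIn)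
    (fun w hw => connectedComponentIn_subset S z hw)
end

section
/- For the polynomial sequence (P_m) of the construction with each b_k a real number satisfying b_k < −6, the sets G^k_m, H^k_m satisfy, for all m ≥ 0 and k ≥ 1: (1) G^k_m and H^k_m are compact and nonempty, and they are decreasing in k, i.e. G^{k+1}_m ⊆ G^k_m and H^{k+1}_m ⊆ H^k_m; (2) P_{m+1}(G^k_m) = G^k_{m+1} and P_{m+1}(H^k_m) = H^k_{m+1}. -/
/-!
Since `b_k < -2`, the preimage of `D̄(0,2)` under `z² + b_k` misses the imaginary axis, and its
part on either side is mapped bijectively, hence homeomorphically, onto the disc; so the component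
`G^k_{M_k-1}` is compact and `P_{M_k}` maps it onto `D̄(0,2)`. Below level `M_k - 1` the sets are
pulled back along the surjective maps `P_{m+1}`, which keeps them compact and makes `P_{m+1}` map
them onto the next level. At a gluing level `M_j - 1` the image is `G^k_{M_j} ∩ D̄(0,2)`, and
`G^k_{M_j} ⊆ D̄(0,2)`: a point of norm `> 2` is squared `m_{j+1} - 1` times and then hit by
`z² + a_{j+1}`, and the choice of `m_{j+1}` puts it outside the preimage of the disc under
`z² + b_{j+1}`. Nonemptiness and compactness then travel along `P_{m+1}(G^k_m) = G^k_{m+1}`, and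
`G^{k+1}_m ⊆ G^k_m` holds at level `M_k - 1` by the gluing and is kept by pull-backs and images.
-/

open Filter Set Metric
open scoped Topology

noncomputable section

/-- `seqQ P m n` is the composition `P n ∘ ⋯ ∘ P (m+1)` (the identity for `n ≤ m`). -/
def seqQ (P : ℕ → ℂ → ℂ) (m : ℕ) : ℕ → ℂ → ℂ
  | 0 => id
  | n + 1 => if n + 1 ≤ m then id else P (n + 1) ∘ seqQ P m n

theorem IsCompact.connectedComponentIn {X : Type*} [TopologicalSpace X] {F : Set X}
    (hF : IsCompact F) (x : X) : IsCompact (connectedComponentIn F x) := by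
  by_cases hx : x ∈ F
  · have := isCompact_iff_compactSpace.mp hF
    rw [connectedComponentIn_eq_image hx]
    exact isClosed_connectedComponent.isCompact.image continuous_subtype_val
  · rw [connectedComponentIn_eq_empty hx]
    exact isCompact_empty

theorem Set.BijOn.isConnected_of_isCompact {X Y : Type*} [TopologicalSpace X]
    [TopologicalSpace Y] [T2Space Y] {f : X → Y} {s : Set X} {t : Set Y} (h : BijOn f s t)
    (hf : ContinuousOn f s) (hs : IsCompact s) (ht : IsConnected t) : IsConnected s := by
  have := isCompact_iff_compactSpace.mp hs
  have hemb := hf.domRestrict.isClosedEmbedding h.injOn.injective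
  refine ⟨(h.image_eq ▸ ht.nonempty).of_image, ?_⟩
  rw [← Subtype.range_coe (s := s), ← image_univ,
    Topology.IsInducing.subtypeVal.isPreconnected_image,
    ← hemb.isInducing.isPreconnected_image, image_univ, range_domRestrict, h.image_eq]
  exact ht.isPreconnected

namespace Complex

theorem surjective_sq_add (c : ℂ) : Function.Surjective fun z : ℂ => z ^ 2 + c := fun w => by
  obtain ⟨z, hz⟩ := IsAlgClosed.exists_pow_nat_eq (w - c) two_pos
  exact ⟨z, by simp [hz]⟩

theorem norm_sq_le_of_norm_sq_add_le {z c : ℂ} {r : ℝ} (h : ‖z ^ 2 + c‖ ≤ r) :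
    ‖z‖ ^ 2 ≤ r + ‖c‖ :=
  calc ‖z‖ ^ 2 = ‖z ^ 2 + c - c‖ := by rw [add_sub_cancel_right, norm_pow]
    _ ≤ ‖z ^ 2 + c‖ + ‖c‖ := norm_sub_le _ _
    _ ≤ r + ‖c‖ := by gcongr

theorem isCompact_preimage_sq_add (c : ℂ) {s : Set ℂ} (hs : IsCompact s) :
    IsCompact ((fun z : ℂ => z ^ 2 + c) ⁻¹' s) := by
  obtain ⟨r, hr⟩ := hs.isBounded.subset_closedBall 0
  refine (isCompact_closedBall 0 (r + ‖c‖ + 1)).of_isClosed_subset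
    (hs.isClosed.preimage (by fun_prop)) fun z hz => ?_
  have := norm_sq_le_of_norm_sq_add_le (mem_closedBall_zero_iff.mp (hr hz))
  rw [mem_closedBall_zero_iff]
  nlinarith [norm_nonneg z]

theorem re_ne_zero_of_norm_sq_add_le_two {c : ℝ} (hc : c < -2) {z : ℂ}
    (hz : ‖z ^ 2 + c‖ ≤ 2) : z.re ≠ 0 := by
  intro h
  have hre : (z ^ 2 + c).re = c - z.im ^ 2 := by simp [sq, h]; ring
  have := (abs_re_le_norm _).trans hz
  rw [hre, abs_le] at this
  nlinarith [sq_nonneg z.im]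

theorem norm_sq_lt_of_norm_sq_add_sq_add_le {w a : ℂ} {b R : ℝ}
    (h : ‖(w ^ 2 + a) ^ 2 + b‖ ≤ 2) (hR : 0 < R - ‖a‖) (hb : |b| + 2 < (R - ‖a‖) ^ 2) :
    ‖w‖ ^ 2 < R := by
  have hu := norm_sq_le_of_norm_sq_add_le h
  rw [norm_real, Real.norm_eq_abs] at hu
  have hu' : ‖w ^ 2 + a‖ < R - ‖a‖ := by nlinarith [norm_nonneg (w ^ 2 + a)]
  linarith [norm_sq_le_of_norm_sq_add_le (le_refl ‖w ^ 2 + a‖)]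

end Complex

section FilledDisc

variable {c : ℝ} {x : ℂ}

theorem bijOn_sq_add_sameSide (hc : c < -2)
    (hx : x ∈ (fun z : ℂ => z ^ 2 + (c : ℂ)) ⁻¹' closedBall 0 2) :
    BijOn (fun z : ℂ => z ^ 2 + (c : ℂ))
      ((fun z : ℂ => z ^ 2 + (c : ℂ)) ⁻¹' closedBall 0 2 ∩ {z | 0 ≤ z.re * x.re})
      (closedBall 0 2) := by
  have hre {z : ℂ} (hz : z ∈ (fun z : ℂ => z ^ 2 + (c : ℂ)) ⁻¹' closedBall 0 2) : z.re ≠ 0 :=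
    Complex.re_ne_zero_of_norm_sq_add_le_two hc (mem_closedBall_zero_iff.mp hz)
  refine ⟨fun z hz => hz.1, fun z₁ hz₁ z₂ hz₂ heq => ?_, fun w hw => ?_⟩
  · have : (z₁ - z₂) * (z₁ + z₂) = 0 := by linear_combination heq
    rcases mul_eq_zero.mp this with h | h
    · exact sub_eq_zero.mp h
    · have hre₁ : z₁.re = -z₂.re := by rw [eq_neg_of_add_eq_zero_left h, Complex.neg_re]
      have h₁ : 0 ≤ z₁.re * x.re := hz₁.2
      have h₂ : 0 ≤ z₂.re * x.re := hz₂.2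
      have : z₁.re * x.re = 0 := by rw [hre₁, neg_mul] at h₁ ⊢; linarith
      exact absurd this (mul_ne_zero (hre hz₁.1) (hre hx))
  · obtain ⟨z, rfl⟩ := Complex.surjective_sq_add c w
    rcases le_total 0 (z.re * x.re) with h | h
    · exact ⟨z, ⟨hw, h⟩, rfl⟩
    · refine ⟨-z, ⟨?_, ?_⟩, ?_⟩
      · simpa using hw
      · simpa using h
      · simp

theorem image_connectedComponentIn_sq_add (hc : c < -2)
    (hx : x ∈ (fun z : ℂ => z ^ 2 + (c : ℂ)) ⁻¹' closedBall 0 2) :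
    (fun z : ℂ => z ^ 2 + (c : ℂ)) ''
      connectedComponentIn ((fun z : ℂ => z ^ 2 + (c : ℂ)) ⁻¹' closedBall 0 2) x =
      closedBall 0 2 := by
  refine (image_subset_iff.mpr (connectedComponentIn_subset _ _)).antisymm ?_
  have hbij := bijOn_sq_add_sameSide hc hx
  have hhalf : IsConnected
      ((fun z : ℂ => z ^ 2 + (c : ℂ)) ⁻¹' closedBall 0 2 ∩ {z | 0 ≤ z.re * x.re}) :=
    hbij.isConnected_of_isCompact (by fun_prop)
      ((Complex.isCompact_preimage_sq_add _ (isCompact_closedBall 0 2)).inter_right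
        (isClosed_le continuous_const (by fun_prop)))
      ((convex_closedBall 0 2).isConnected (nonempty_closedBall.mpr zero_le_two))
  exact hbij.surjOn.mono (hhalf.isPreconnected.subset_connectedComponentIn
    ⟨hx, mul_self_nonneg x.re⟩ inter_subset_left) subset_rfl

end FilledDisc

theorem pow_two_pow_mem_of_mapsTo {R : Type*} [Monoid R] {T : ℕ → Set R} {f : ℕ → R → R}
    {m d : ℕ} (hf : ∀ i < d, f (m + i + 1) = fun z => z ^ 2)
    (hT : ∀ i < d, MapsTo (f (m + i + 1)) (T (m + i)) (T (m + i + 1))) {z : R} (hz : z ∈ T m) :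
    z ^ 2 ^ d ∈ T (m + d) := by
  induction d with
  | zero => simpa using hz
  | succ d ih =>
    have := hT d d.lt_succ_self (ih (fun i hi => hf i (by omega)) fun i hi => hT i (by omega))
    rw [hf d d.lt_succ_self] at this
    rwa [pow_succ, pow_mul]

theorem nonempty_iff_of_image_eq {X : Type*} {f : ℕ → X → X} {T : ℕ → Set X}
    (h : ∀ m, f m '' T m = T (m + 1)) (m : ℕ) : (T m).Nonempty ↔ (T 0).Nonempty := by
  induction m with
  | zero => rfl
  | succ m ih => rw [← h, image_nonempty, ih]

theorem isCompact_of_image_eq {X : Type*} [TopologicalSpace X] {f : ℕ → X → X} {T : ℕ → Set X}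
    (hf : ∀ m, Continuous (f m)) (h : ∀ m, f m '' T m = T (m + 1)) (h₀ : IsCompact (T 0))
    (m : ℕ) : IsCompact (T m) := by
  induction m with
  | zero => exact h₀
  | succ m ih => exact h m ▸ ih.image (hf m)

structure IsConstruction (a : ℕ → ℂ) (b : ℕ → ℝ) (mk M : ℕ → ℕ) (P : ℕ → ℂ → ℂ) : Prop where
  M_succ : ∀ k, M (k + 1) = M k + mk (k + 1) + 1
  one_le_mk : ∀ k, 1 ≤ k → 1 ≤ mk k
  b_lt : ∀ k, 1 ≤ k → b k < -2
  escape_pos : ∀ k, 1 ≤ k → 0 < (2 : ℝ) ^ 2 ^ mk k - ‖a k‖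
  escape : ∀ k, 1 ≤ k → |b k| + 2 < ((2 : ℝ) ^ 2 ^ mk k - ‖a k‖) ^ 2
  P_a : ∀ k, 1 ≤ k → P (M k - 1) = fun z => z ^ 2 + a k
  P_b : ∀ k, 1 ≤ k → P (M k) = fun z => z ^ 2 + (b k : ℂ)
  P_other : ∀ m, 1 ≤ m → (∀ k, 1 ≤ k → m ≠ M k - 1 ∧ m ≠ M k) → P m = fun z => z ^ 2

namespace IsConstruction

variable {a : ℕ → ℂ} {b : ℕ → ℝ} {mk M : ℕ → ℕ} {P : ℕ → ℂ → ℂ}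

theorem add_two_le (hC : IsConstruction a b mk M P) (k : ℕ) : M k + 2 ≤ M (k + 1) := by
  have := hC.one_le_mk (k + 1) k.succ_pos
  rw [hC.M_succ]
  omega

theorem strictMono (hC : IsConstruction a b mk M P) : StrictMono M :=
  strictMono_nat_of_lt_succ fun k => by linarith [hC.add_two_le k]

theorem two_le (hC : IsConstruction a b mk M P) {k : ℕ} (hk : 1 ≤ k) : 2 ≤ M k := by
  linarith [hC.add_two_le 0, hC.strictMono.monotone hk]

theorem P_sq (hC : IsConstruction a b mk M P) {j i : ℕ} (hi : i + 1 < mk (j + 1)) :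
    P (M j + i + 1) = fun z => z ^ 2 := by
  have hMj := hC.M_succ j
  have between {k : ℕ} (h₁ : M j < M k) (h₂ : M k < M (j + 1)) : False := by
    have := hC.strictMono.lt_iff_lt.mp h₁
    have := hC.strictMono.lt_iff_lt.mp h₂
    omega
  refine hC.P_other _ (by omega) fun k _ =>
    ⟨fun h => between (k := k) (by omega) (by omega),
      fun h => between (k := k) (by omega) (by omega)⟩

theorem exists_eq_sq_add (hC : IsConstruction a b mk M P) {n : ℕ} (hn : 1 ≤ n) :
    ∃ c : ℂ, P n = fun z => z ^ 2 + c := by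
  by_cases hna : ∃ k, 1 ≤ k ∧ n = M k - 1
  · obtain ⟨k, hk, rfl⟩ := hna
    exact ⟨a k, hC.P_a k hk⟩
  by_cases hnb : ∃ k, 1 ≤ k ∧ n = M k
  · obtain ⟨k, hk, rfl⟩ := hnb
    exact ⟨b k, hC.P_b k hk⟩
  push Not at hna hnb
  exact ⟨0, by simpa using hC.P_other n hn fun k hk => ⟨hna k hk, hnb k hk⟩⟩

theorem continuous (hC : IsConstruction a b mk M P) {n : ℕ} (hn : 1 ≤ n) : Continuous (P n) := by
  obtain ⟨c, hc⟩ := hC.exists_eq_sq_add hn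
  rw [hc]
  fun_prop

theorem surjective (hC : IsConstruction a b mk M P) {n : ℕ} (hn : 1 ≤ n) :
    Function.Surjective (P n) := by
  obtain ⟨c, hc⟩ := hC.exists_eq_sq_add hn
  exact hc ▸ Complex.surjective_sq_add c

theorem isCompact_preimage (hC : IsConstruction a b mk M P) {n : ℕ} (hn : 1 ≤ n) {s : Set ℂ}
    (hs : IsCompact s) : IsCompact (P n ⁻¹' s) := by
  obtain ⟨c, hc⟩ := hC.exists_eq_sq_add hn
  exact hc ▸ Complex.isCompact_preimage_sq_add c hs

theorem image_connectedComponentIn (hC : IsConstruction a b mk M P) {k : ℕ} (hk : 1 ≤ k)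
    {x : ℂ} (hx : x ^ 2 + b k = 0) :
    P (M k) '' connectedComponentIn (P (M k) ⁻¹' closedBall 0 2) x = closedBall 0 2 := by
  rw [hC.P_b k hk]
  exact image_connectedComponentIn_sq_add (hC.b_lt k hk) (by simp [hx])

theorem isCompact_connectedComponentIn (hC : IsConstruction a b mk M P) {k : ℕ} (hk : 1 ≤ k)
    (x : ℂ) : IsCompact (connectedComponentIn (P (M k) ⁻¹' closedBall 0 2) x) :=
  (hC.isCompact_preimage (by linarith [hC.two_le hk])
    (isCompact_closedBall 0 2)).connectedComponentIn x

end IsConstruction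

theorem seqQ_succ_of_le (P : ℕ → ℂ → ℂ) {m n : ℕ} (h : m ≤ n) :
    seqQ P m (n + 1) = P (n + 1) ∘ seqQ P m n := by
  rw [seqQ, if_neg (by omega)]

/-- The recursion defining `G^k_m` (or `H^k_m`) from the top sets `G^k_{M_k - 1}`. -/
structure IsPullbackFamily (M : ℕ → ℕ) (P : ℕ → ℂ → ℂ) (S : ℕ → ℕ → Set ℂ) : Prop where
  eq_preimage : ∀ k, 1 ≤ k → ∀ m, m + 2 ≤ M k →
    (∀ j, 1 ≤ j → j < k → m ≠ M j - 1) → S k m = P (m + 1) ⁻¹' S k (m + 1)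
  eq_preimage_inter : ∀ k, 1 ≤ k → ∀ m, m + 2 ≤ M k → ∀ j, 1 ≤ j → j < k → m = M j - 1 →
    S k m = P (m + 1) ⁻¹' S k (m + 1) ∩ S j (M j - 1)
  eq_image_seqQ : ∀ k, 1 ≤ k → ∀ m, M k - 1 ≤ m → S k m = seqQ P (M k - 1) m '' S k (M k - 1)

namespace IsPullbackFamily

variable {a : ℕ → ℂ} {b : ℕ → ℝ} {mk M : ℕ → ℕ} {P : ℕ → ℂ → ℂ} {S : ℕ → ℕ → Set ℂ} {k : ℕ}

theorem image_eq_of_le (hS : IsPullbackFamily M P S) (hk : 1 ≤ k) {m : ℕ} (hm : M k - 1 ≤ m) :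
    P (m + 1) '' S k m = S k (m + 1) := by
  rw [hS.eq_image_seqQ k hk m hm, hS.eq_image_seqQ k hk (m + 1) (by omega),
    seqQ_succ_of_le P hm, image_comp]

theorem mapsTo (hS : IsPullbackFamily M P S) (hk : 1 ≤ k) (m : ℕ) :
    MapsTo (P (m + 1)) (S k m) (S k (m + 1)) := by
  rcases le_or_gt (M k - 1) m with hm | hm
  · exact hS.image_eq_of_le hk hm ▸ mapsTo_image _ _
  by_cases hglue : ∃ j, 1 ≤ j ∧ j < k ∧ m = M j - 1
  · obtain ⟨j, hj, hjk, hmj⟩ := hglue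
    rw [hS.eq_preimage_inter k hk m (by omega) j hj hjk hmj]
    exact fun z hz => hz.1
  · push Not at hglue
    rw [hS.eq_preimage k hk m (by omega) hglue]
    exact mapsTo_preimage _ _

theorem subset_top_of_le (hS : IsPullbackFamily M P S) (hC : IsConstruction a b mk M P)
    {j : ℕ} (hj : 1 ≤ j) (hjk : j ≤ k) : S k (M j - 1) ⊆ S j (M j - 1) := by
  rcases hjk.eq_or_lt with rfl | hjk
  · exact subset_rfl
  have := hC.strictMono.monotone (show j + 1 ≤ k from hjk)
  have := hC.add_two_le j
  rw [hS.eq_preimage_inter k (by omega) _ (by omega) j hj hjk rfl]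
  exact inter_subset_right

theorem subset_closedBall_two (hS : IsPullbackFamily M P S) (hC : IsConstruction a b mk M P)
    (htop : ∀ k, 1 ≤ k → P (M k) '' S k (M k - 1) = closedBall 0 2) {j : ℕ} (hjk : j < k) :
    S k (M j) ⊆ closedBall 0 2 := by
  intro z hz
  obtain ⟨d, hd⟩ := Nat.exists_eq_add_one.mpr (hC.one_le_mk (j + 1) j.succ_pos)
  have hMj : M (j + 1) = M j + d + 2 := by rw [hC.M_succ, hd]; ring
  have hw : z ^ 2 ^ d ∈ S k (M j + d) :=
    pow_two_pow_mem_of_mapsTo (fun i hi => hC.P_sq (by omega))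
      (fun i _ => hS.mapsTo (by omega) _) hz
  have hu : (z ^ 2 ^ d) ^ 2 + a (j + 1) ∈ S (j + 1) (M (j + 1) - 1) := by
    have := hS.mapsTo (by omega) (M j + d) hw
    rw [show M j + d + 1 = M (j + 1) - 1 by omega, hC.P_a (j + 1) j.succ_pos] at this
    exact hS.subset_top_of_le hC j.succ_pos hjk this
  have hv : ‖((z ^ 2 ^ d) ^ 2 + a (j + 1)) ^ 2 + b (j + 1)‖ ≤ 2 := by
    have := htop (j + 1) j.succ_pos ▸ mem_image_of_mem _ hu
    rwa [hC.P_b (j + 1) j.succ_pos, mem_closedBall_zero_iff] at this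
  have := Complex.norm_sq_lt_of_norm_sq_add_sq_add_le hv (hC.escape_pos _ j.succ_pos)
    (hC.escape _ j.succ_pos)
  rw [← norm_pow, ← pow_mul, ← pow_succ, hd, norm_pow] at this
  exact mem_closedBall_zero_iff.mpr (lt_of_pow_lt_pow_left₀ _ zero_le_two this).le

theorem image_eq (hS : IsPullbackFamily M P S) (hC : IsConstruction a b mk M P)
    (htop : ∀ k, 1 ≤ k → P (M k) '' S k (M k - 1) = closedBall 0 2) (hk : 1 ≤ k) (m : ℕ) :
    P (m + 1) '' S k m = S k (m + 1) := by
  rcases le_or_gt (M k - 1) m with hm | hm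
  · exact hS.image_eq_of_le hk hm
  by_cases hglue : ∃ j, 1 ≤ j ∧ j < k ∧ m = M j - 1
  · obtain ⟨j, hj, hjk, rfl⟩ := hglue
    rw [hS.eq_preimage_inter k hk _ (by omega) j hj hjk rfl, image_preimage_inter,
      Nat.sub_add_cancel (by linarith [hC.two_le hj]), htop j hj, inter_eq_left]
    exact hS.subset_closedBall_two hC htop hjk
  · push Not at hglue
    rw [hS.eq_preimage k hk m (by omega) hglue, image_preimage_eq _ (hC.surjective m.succ_pos)]

theorem isCompact_of_le (hS : IsPullbackFamily M P S) (hC : IsConstruction a b mk M P)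
    (htop : ∀ k, 1 ≤ k → IsCompact (S k (M k - 1))) (hk : 1 ≤ k) {m : ℕ} (hm : m ≤ M k - 1) :
    IsCompact (S k m) := by
  induction hm using Nat.decreasingInduction with
  | self => exact htop k hk
  | of_succ m hm ih =>
    have hpre := hC.isCompact_preimage m.succ_pos ih
    by_cases hglue : ∃ j, 1 ≤ j ∧ j < k ∧ m = M j - 1
    · obtain ⟨j, hj, hjk, hmj⟩ := hglue
      rw [hS.eq_preimage_inter k hk m (by omega) j hj hjk hmj]
      exact hpre.inter_right (htop j hj).isClosed
    · push Not at hglue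
      rwa [hS.eq_preimage k hk m (by omega) hglue]

theorem succ_subset (hS : IsPullbackFamily M P S) (hC : IsConstruction a b mk M P)
    (htop : ∀ k, 1 ≤ k → P (M k) '' S k (M k - 1) = closedBall 0 2) (hk : 1 ≤ k) (m : ℕ) :
    S (k + 1) m ⊆ S k m := by
  have hMk := hC.add_two_le k
  have htopk : S (k + 1) (M k - 1) ⊆ S k (M k - 1) := hS.subset_top_of_le hC hk k.le_succ
  rcases le_total m (M k - 1) with hm | hm
  · induction hm using Nat.decreasingInduction with
    | self => exact htopk
    | of_succ m hm ih =>
      by_cases hglue : ∃ j, 1 ≤ j ∧ j < k ∧ m = M j - 1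
      · obtain ⟨j, hj, hjk, hmj⟩ := hglue
        rw [hS.eq_preimage_inter k hk m (by omega) j hj hjk hmj,
          hS.eq_preimage_inter (k + 1) (by omega) m (by omega) j hj (by omega) hmj]
        exact inter_subset_inter_left _ (preimage_mono ih)
      · push Not at hglue
        have hglue' : ∀ j, 1 ≤ j → j < k + 1 → m ≠ M j - 1 := fun j hj hjk => by
          rcases (Nat.lt_succ_iff.mp hjk).eq_or_lt with rfl | hjk
          · omega
          · exact hglue j hj hjk
        rw [hS.eq_preimage k hk m (by omega) hglue,
          hS.eq_preimage (k + 1) (by omega) m (by omega) hglue']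
        exact preimage_mono ih
  · induction m, hm using Nat.le_induction with
    | base => exact htopk
    | succ m _ ih =>
      rw [← hS.image_eq hC htop hk, ← hS.image_eq hC htop (by omega)]
      exact image_mono ih

theorem isCompact_nonempty_antitone_image_eq (hS : IsPullbackFamily M P S)
    (hC : IsConstruction a b mk M P) {x : ℕ → ℂ}
    (htop : ∀ k, 1 ≤ k →
      S k (M k - 1) = connectedComponentIn (P (M k) ⁻¹' closedBall 0 2) (x k))
    (hx : ∀ k, 1 ≤ k → x k ^ 2 + b k = 0) (hk : 1 ≤ k) (m : ℕ) :
    IsCompact (S k m) ∧ (S k m).Nonempty ∧ S (k + 1) m ⊆ S k m ∧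
      P (m + 1) '' S k m = S k (m + 1) := by
  have himage : ∀ k, 1 ≤ k → P (M k) '' S k (M k - 1) = closedBall 0 2 := fun k hk => by
    rw [htop k hk]
    exact hC.image_connectedComponentIn hk (hx k hk)
  have hcompact : ∀ k, 1 ≤ k → IsCompact (S k (M k - 1)) := fun k hk => by
    rw [htop k hk]
    exact hC.isCompact_connectedComponentIn hk (x k)
  have hnonempty : (S k (M k - 1)).Nonempty := by
    rw [htop k hk]
    exact ⟨x k, mem_connectedComponentIn (by simp [hC.P_b k hk, hx k hk])⟩
  have himage_k := hS.image_eq hC himage hk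
  refine ⟨isCompact_of_image_eq (f := fun m => P (m + 1)) (fun m => hC.continuous m.succ_pos)
      himage_k (hS.isCompact_of_le hC hcompact hk (Nat.zero_le _)) m,
    (nonempty_iff_of_image_eq himage_k m).mpr
      ((nonempty_iff_of_image_eq himage_k _).mp hnonempty),
    hS.succ_subset hC himage hk m, himage_k m⟩

end IsPullbackFamily

/-- For the constructed polynomial sequence (with `b k < −6` real), the sets `G^k_m`, `H^k_m`
are compact, nonempty, decreasing in `k`, and satisfy `P_{m+1}(G^k_m) = G^k_{m+1}` and
`P_{m+1}(H^k_m) = H^k_{m+1}`. -/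
theorem GH_compact_nonempty_decreasing_invariant
    (a : ℕ → ℂ) (b : ℕ → ℝ) (mk : ℕ → ℕ) (M : ℕ → ℕ)
    (hb : ∀ k, 1 ≤ k → b k < -6)
    (hmk : ∀ k, 1 ≤ k → 1 ≤ mk k)
    (hinv1 : ∀ k, 1 ≤ k → (2 : ℝ) ^ k < 2 ^ 2 ^ mk k - ‖a k‖)
    (hinv2 : ∀ k, 1 ≤ k →
      (2 : ℝ) ^ k < ((2 : ℝ) ^ 2 ^ mk k - ‖a k‖) ^ 2 - |b k|)
    (hM : ∀ k, M k = ∑ j ∈ Finset.range k, (mk (j + 1) + 1))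
    (P : ℕ → ℂ → ℂ)
    (hPa : ∀ k, 1 ≤ k → P (M k - 1) = fun z => z ^ 2 + a k)
    (hPb : ∀ k, 1 ≤ k → P (M k) = fun z => z ^ 2 + (b k : ℂ))
    (hPother : ∀ m, 1 ≤ m → (∀ k, 1 ≤ k → m ≠ M k - 1 ∧ m ≠ M k) →
      P m = fun z => z ^ 2)
    (G H : ℕ → ℕ → Set ℂ)
    (hGtop : ∀ k, 1 ≤ k → G k (M k - 1) =
      connectedComponentIn (P (M k) ⁻¹' Metric.closedBall 0 2)
        ((Real.sqrt (-b k) : ℝ) : ℂ))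
    (hHtop : ∀ k, 1 ≤ k → H k (M k - 1) =
      connectedComponentIn (P (M k) ⁻¹' Metric.closedBall 0 2)
        (-((Real.sqrt (-b k) : ℝ) : ℂ)))
    (hGdown : ∀ k, 1 ≤ k → ∀ m, m + 2 ≤ M k →
      (∀ j, 1 ≤ j → j < k → m ≠ M j - 1) → G k m = P (m + 1) ⁻¹' G k (m + 1))
    (hGdown' : ∀ k, 1 ≤ k → ∀ m, m + 2 ≤ M k → ∀ j, 1 ≤ j → j < k → m = M j - 1 →
      G k m = P (m + 1) ⁻¹' G k (m + 1) ∩ G j (M j - 1))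
    (hHdown : ∀ k, 1 ≤ k → ∀ m, m + 2 ≤ M k →
      (∀ j, 1 ≤ j → j < k → m ≠ M j - 1) → H k m = P (m + 1) ⁻¹' H k (m + 1))
    (hHdown' : ∀ k, 1 ≤ k → ∀ m, m + 2 ≤ M k → ∀ j, 1 ≤ j → j < k → m = M j - 1 →
      H k m = P (m + 1) ⁻¹' H k (m + 1) ∩ H j (M j - 1))
    (hGup : ∀ k, 1 ≤ k → ∀ m, M k - 1 ≤ m → G k m = seqQ P (M k - 1) m '' G k (M k - 1))
    (hHup : ∀ k, 1 ≤ k → ∀ m, M k - 1 ≤ m → H k m = seqQ P (M k - 1) m '' H k (M k - 1)) :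
    ∀ m : ℕ, ∀ k, 1 ≤ k →
      (IsCompact (G k m) ∧ (G k m).Nonempty ∧
        IsCompact (H k m) ∧ (H k m).Nonempty ∧
        G (k + 1) m ⊆ G k m ∧ H (k + 1) m ⊆ H k m) ∧
      (P (m + 1) '' G k m = G k (m + 1) ∧ P (m + 1) '' H k m = H k (m + 1)) := by
  have two_le_pow (k : ℕ) (hk : 1 ≤ k) : (2 : ℝ) ≤ 2 ^ k := le_self_pow₀ one_le_two (by omega)
  have hC : IsConstruction a b mk M P :=
    { M_succ := fun k => by rw [hM, hM, Finset.sum_range_succ, add_assoc]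
      one_le_mk := hmk
      b_lt := fun k hk => by linarith [hb k hk]
      escape_pos := fun k hk => by linarith [hinv1 k hk, two_le_pow k hk]
      escape := fun k hk => by linarith [hinv2 k hk, two_le_pow k hk]
      P_a := hPa
      P_b := hPb
      P_other := hPother }
  have hroot : ∀ k, 1 ≤ k → ((Real.sqrt (-b k) : ℝ) : ℂ) ^ 2 + b k = 0 := fun k hk => by
    rw [← Complex.ofReal_pow, Real.sq_sqrt (by linarith [hb k hk])]
    push_cast
    ring
  intro m k hk
  have hGfam : IsPullbackFamily M P G := ⟨hGdown, hGdown', hGup⟩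
  have hHfam : IsPullbackFamily M P H := ⟨hHdown, hHdown', hHup⟩
  obtain ⟨hGc, hGn, hGd, hGi⟩ := hGfam.isCompact_nonempty_antitone_image_eq hC hGtop hroot hk m
  obtain ⟨hHc, hHn, hHd, hHi⟩ := hHfam.isCompact_nonempty_antitone_image_eq hC hHtop
    (fun k hk => by rw [neg_sq]; exact hroot k hk) hk m
  exact ⟨⟨hGc, hGn, hHc, hHn, hGd, hHd⟩, hGi, hHi⟩
end
end

section
/- Let b < −4 be real, set r = √(−b) − √(−b − 2) and s = √(−b + 2) − √(−b), and let G and H be the connected components of the preimage of the closed disc D̄(0,2) under z ↦ z² + b containing √(−b) and −√(−b) respectively. Then the maximum distance of points of ∂G from √(−b) (and of points of ∂H from −√(−b)) equals r, and the minimum distance of points of ∂G from √(−b) (and of points of ∂H from −√(−b)) equals s; in particular D(√(−b), s) ⊆ G ⊆ D̄(√(−b), r) and D(−√(−b), s) ⊆ H ⊆ D̄(−√(−b), r). -/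
open Metric Set

set_option maxHeartbeats 1000000 in

lemma aux_main (b c d e r s : ℝ) (hb : b < -4)
    (hc : c = Real.sqrt (-b)) (hd : d = Real.sqrt (-b - 2)) (he : e = Real.sqrt (-b + 2))
    (hr : r = c - d) (hs : s = e - c)
    (w : ℂ) (hwu : ∃ u : ℝ, (u = 1 ∨ u = -1) ∧ w = ((u * c : ℝ) : ℂ))
    (G : Set ℂ)
    (hG : G = connectedComponentIn ((fun z : ℂ => z ^ 2 + (b : ℂ)) ⁻¹' Metric.closedBall 0 2) w) :
    IsGreatest ((fun z : ℂ => dist z w) '' frontier G) r ∧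
    IsLeast ((fun z : ℂ => dist z w) '' frontier G) s ∧
    Metric.ball w s ⊆ G ∧
    G ⊆ Metric.closedBall w r := by
  obtain ⟨u, hu, hw⟩ := hwu
  -- basic real facts
  have hnb : (4:ℝ) < -b := by linarith
  have hc2 : c ^ 2 = -b := by rw [hc]; exact Real.sq_sqrt (by linarith)
  have hd2 : d ^ 2 = -b - 2 := by rw [hd]; exact Real.sq_sqrt (by linarith)
  have he2 : e ^ 2 = -b + 2 := by rw [he]; exact Real.sq_sqrt (by linarith)
  have hc0 : 0 ≤ c := hc ▸ Real.sqrt_nonneg _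
  have hd0' : 0 ≤ d := hd ▸ Real.sqrt_nonneg _
  have he0 : 0 ≤ e := he ▸ Real.sqrt_nonneg _
  have hc2' : 2 < c := by nlinarith
  have hd0 : 0 < d := by nlinarith
  have hdc : d < c := by nlinarith
  have hce : c < e := by nlinarith
  have hr0 : 0 < r := by rw [hr]; linarith
  have hs0 : 0 < s := by rw [hs]; linarith
  have hkey1 : r * (2 * c - r) = 2 := by rw [hr]; linear_combination hc2 - hd2
  have hkey2 : s * (s + 2 * c) = 2 := by rw [hs]; linear_combination he2 - hc2
  have hrc : r < c := by rw [hr]; linarith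
  have hu2 : u ^ 2 = 1 := by rcases hu with h | h <;> rw [h] <;> norm_num
  have habsu : |u| = 1 := by rcases hu with h | h <;> rw [h] <;> norm_num
  have hu2c : ((u : ℂ)) ^ 2 = 1 := by exact_mod_cast hu2
  have hw2 : w ^ 2 = -(b : ℂ) := by
    have hc2c : (c : ℂ) ^ 2 = -(b : ℂ) := by exact_mod_cast hc2
    rw [hw]; push_cast
    linear_combination (c:ℂ)^2 * hu2c + hc2c
  have hfac : ∀ z : ℂ, z ^ 2 + (b : ℂ) = (z - w) * (z + w) := fun z => by
    linear_combination hw2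
  set P : Set ℂ := (fun z : ℂ => z ^ 2 + (b : ℂ)) ⁻¹' Metric.closedBall 0 2 with hP
  have hmem : ∀ z : ℂ, z ∈ P ↔ dist z w * dist z (-w) ≤ 2 := by
    intro z
    simp only [hP, mem_preimage, Metric.mem_closedBall, dist_zero_right]
    rw [hfac z, norm_mul, dist_eq_norm, dist_eq_norm, sub_neg_eq_add]
  have hdist_ww : dist w (-w) = 2 * c := by
    rw [dist_eq_norm, sub_neg_eq_add]
    have h1 : w + w = ((2 * (u * c) : ℝ) : ℂ) := by rw [hw]; push_cast; ring
    rw [h1, Complex.norm_real, Real.norm_eq_abs, abs_mul, abs_mul, habsu]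
    rw [abs_of_nonneg (by norm_num : (0:ℝ) ≤ 2), abs_of_nonneg hc0]; ring
  have hp_dist : ∀ t t' : ℝ, dist ((u * t : ℝ) : ℂ) ((u * t' : ℝ) : ℂ) = |t - t'| := by
    intro t t'
    rw [dist_eq_norm]
    have h1 : ((u * t : ℝ) : ℂ) - ((u * t' : ℝ) : ℂ) = ((u * (t - t') : ℝ) : ℂ) := by
      push_cast; ring
    rw [h1, Complex.norm_real, Real.norm_eq_abs, abs_mul, habsu, one_mul]
  have hp_distw : ∀ t : ℝ, dist ((u * t : ℝ) : ℂ) w = |t - c| := by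
    intro t; rw [hw]; exact hp_dist t c
  have hp_mem : ∀ t : ℝ, (((u * t : ℝ) : ℂ) ∈ P ↔ |t ^ 2 + b| ≤ 2) := by
    intro t
    simp only [hP, mem_preimage, Metric.mem_closedBall, dist_zero_right]
    have h1 : (((u * t : ℝ) : ℂ)) ^ 2 + (b : ℂ) = ((t ^ 2 + b : ℝ) : ℂ) := by
      push_cast; linear_combination (t : ℂ) ^ 2 * hu2c
    rw [h1, Complex.norm_real, Real.norm_eq_abs]
  have hGP : G ⊆ P := hG ▸ connectedComponentIn_subset _ _
  have hwP : w ∈ P := by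
    rw [hmem]
    have := dist_nonneg (x := w) (y := -w)
    simp [dist_self]
  have hwG : w ∈ G := hG ▸ mem_connectedComponentIn hwP
  -- the real segment from d to e maps into G
  have hseg : (fun t : ℝ => ((u * t : ℝ) : ℂ)) '' Icc d e ⊆ G := by
    rw [hG]
    apply IsPreconnected.subset_connectedComponentIn (x := w)
    · exact isPreconnected_Icc.image _ (Continuous.continuousOn (Complex.continuous_ofReal.comp (continuous_const.mul continuous_id)))
    · exact ⟨c, ⟨le_of_lt hdc, le_of_lt hce⟩, hw.symm⟩
    · rintro z ⟨t, ht, rfl⟩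
      rw [hp_mem, abs_le]
      constructor <;> nlinarith [ht.1, ht.2]
  have hdG : ((u * d : ℝ) : ℂ) ∈ G := hseg ⟨d, ⟨le_refl d, by linarith⟩, rfl⟩
  have heG : ((u * e : ℝ) : ℂ) ∈ G := hseg ⟨e, ⟨by linarith, le_refl e⟩, rfl⟩
  -- closed ball of radius s is inside G
  have hcball : Metric.closedBall w s ⊆ G := by
    rw [hG]
    apply IsPreconnected.subset_connectedComponentIn (x := w)
    · exact (convex_closedBall w s).isPreconnected
    · exact Metric.mem_closedBall_self (le_of_lt hs0)
    · intro z hz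
      rw [hmem]
      have h1 : dist z w ≤ s := Metric.mem_closedBall.1 hz
      have h2 : dist z (-w) ≤ dist z w + dist w (-w) := dist_triangle _ _ _
      rw [hdist_ww] at h2
      have h3 : dist z w * dist z (-w) ≤ s * (s + 2 * c) :=
        mul_le_mul h1 (by linarith) dist_nonneg (by linarith)
      linarith
  -- G is inside the closed ball of radius r
  have houter : G ⊆ Metric.closedBall w r := by
    intro z0 hz0G
    by_contra hz0
    have hGc : IsPreconnected G := hG ▸ isPreconnected_connectedComponentIn
    have hVopen : IsOpen {z : ℂ | r < dist z w} :=
      isOpen_lt continuous_const (Continuous.dist continuous_id continuous_const)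
    obtain ⟨y, hyG, hyU, hyV⟩ := hGc (Metric.ball w (2 * c - r)) {z : ℂ | r < dist z w}
      Metric.isOpen_ball hVopen
      (by
        intro z hz
        rcases le_or_gt (dist z w) r with h | h
        · left; rw [Metric.mem_ball]; linarith
        · right; exact h)
      ⟨w, hwG, by rw [Metric.mem_ball, dist_self]; linarith⟩
      ⟨z0, hz0G, by
        simp only [mem_setOf_eq]
        rw [Metric.mem_closedBall] at hz0
        linarith [not_le.mp hz0]⟩
    rw [Metric.mem_ball] at hyU
    rw [mem_setOf_eq] at hyV
    have hy1 : dist y w * dist y (-w) ≤ 2 := (hmem y).1 (hGP hyG)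
    have hy2 : dist w (-w) ≤ dist w y + dist y (-w) := dist_triangle _ _ _
    rw [hdist_ww, dist_comm w y] at hy2
    nlinarith [mul_pos (sub_pos.2 hyV) (sub_pos.2 hyU), dist_nonneg (x := y) (y := w),
      dist_nonneg (x := y) (y := -w)]
  -- frontier bounds
  have hfro_sub : ∀ z ∈ frontier G, dist z w ≤ r := by
    intro z hz
    have : z ∈ Metric.closedBall w r :=
      (closure_minimal houter Metric.isClosed_closedBall) (frontier_subset_closure hz)
    exact Metric.mem_closedBall.1 this
  have hball_int : Metric.ball w s ⊆ interior G :=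
    interior_maximal ((Metric.ball_subset_closedBall).trans hcball) Metric.isOpen_ball
  have hfro_far : ∀ z ∈ frontier G, s ≤ dist z w := by
    intro z hz
    by_contra h
    have : z ∈ interior G := hball_int (Metric.mem_ball.2 (not_le.mp h))
    exact hz.2 this
  -- frontier witnesses
  have hd_fr : ((u * d : ℝ) : ℂ) ∈ frontier G := by
    constructor
    · exact subset_closure hdG
    · intro hint
      obtain ⟨ε, hε, hball⟩ := Metric.mem_nhds_iff.1 (mem_interior_iff_mem_nhds.1 hint)
      set δ := min (ε / 2) (d / 2) with hδ
      have hδ0 : 0 < δ := lt_min (by linarith) (by linarith)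
      have hδd : δ ≤ d / 2 := min_le_right _ _
      have hδε : δ < ε := lt_of_le_of_lt (min_le_left _ _) (by linarith)
      have hmem' : ((u * (d - δ) : ℝ) : ℂ) ∈ Metric.ball ((u * d : ℝ) : ℂ) ε := by
        rw [Metric.mem_ball, hp_dist]
        rw [abs_of_nonpos (by linarith)]
        linarith
      have hinP : ((u * (d - δ) : ℝ) : ℂ) ∈ P := hGP (hball hmem')
      rw [hp_mem] at hinP
      have h1 : (d - δ) ^ 2 + b < -2 := by nlinarith
      have := neg_le_of_abs_le hinP
      linarith
  have he_fr : ((u * e : ℝ) : ℂ) ∈ frontier G := by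
    constructor
    · exact subset_closure heG
    · intro hint
      obtain ⟨ε, hε, hball⟩ := Metric.mem_nhds_iff.1 (mem_interior_iff_mem_nhds.1 hint)
      have hmem' : ((u * (e + ε / 2) : ℝ) : ℂ) ∈ Metric.ball ((u * e : ℝ) : ℂ) ε := by
        rw [Metric.mem_ball, hp_dist]
        rw [abs_of_nonneg (by linarith)]
        linarith
      have hinP : ((u * (e + ε / 2) : ℝ) : ℂ) ∈ P := hGP (hball hmem')
      rw [hp_mem] at hinP
      have h1 : 2 < (e + ε / 2) ^ 2 + b := by nlinarith
      have := le_of_abs_le hinP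
      linarith
  refine ⟨⟨⟨_, hd_fr, ?_⟩, ?_⟩, ⟨⟨_, he_fr, ?_⟩, ?_⟩, ?_, houter⟩
  · show dist ((u * d : ℝ) : ℂ) w = r
    rw [hp_distw, abs_of_nonpos (by linarith), hr]; ring
  · rintro v ⟨z, hz, rfl⟩; exact hfro_sub z hz
  · show dist ((u * e : ℝ) : ℂ) w = s
    rw [hp_distw, abs_of_nonneg (by linarith), hs]
  · rintro v ⟨z, hz, rfl⟩; exact hfro_far z hz
  · exact (Metric.ball_subset_closedBall).trans hcball

/-- Let `b < −4` be real, `r = √(−b) − √(−b−2)`, `s = √(−b+2) − √(−b)`, and let `G`, `H` be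
the connected components of the preimage of `D̄(0,2)` under `z ↦ z² + b` containing `√(−b)`
and `−√(−b)` respectively. Then the maximum distance of points of `∂G` (resp. `∂H`) from
`√(−b)` (resp. `−√(−b)`) equals `r`, the minimum such distance equals `s`, and in particular
`D(±√(−b), s) ⊆ G, H ⊆ D̄(±√(−b), r)`. -/
theorem component_distance_bounds
    (b : ℝ) (hb : b < -4)
    (r s : ℝ) (hr : r = Real.sqrt (-b) - Real.sqrt (-b - 2))
    (hs : s = Real.sqrt (-b + 2) - Real.sqrt (-b))
    (G H : Set ℂ)
    (hG : G = connectedComponentIn ((fun z : ℂ => z ^ 2 + (b : ℂ)) ⁻¹' Metric.closedBall 0 2)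
      ((Real.sqrt (-b) : ℝ) : ℂ))
    (hH : H = connectedComponentIn ((fun z : ℂ => z ^ 2 + (b : ℂ)) ⁻¹' Metric.closedBall 0 2)
      (-((Real.sqrt (-b) : ℝ) : ℂ))) :
    IsGreatest ((fun z : ℂ => dist z (((Real.sqrt (-b) : ℝ) : ℂ))) '' frontier G) r ∧
    IsGreatest ((fun z : ℂ => dist z (-((Real.sqrt (-b) : ℝ) : ℂ))) '' frontier H) r ∧
    IsLeast ((fun z : ℂ => dist z (((Real.sqrt (-b) : ℝ) : ℂ))) '' frontier G) s ∧
    IsLeast ((fun z : ℂ => dist z (-((Real.sqrt (-b) : ℝ) : ℂ))) '' frontier H) s ∧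
    Metric.ball (((Real.sqrt (-b) : ℝ) : ℂ)) s ⊆ G ∧
    G ⊆ Metric.closedBall (((Real.sqrt (-b) : ℝ) : ℂ)) r ∧
    Metric.ball (-((Real.sqrt (-b) : ℝ) : ℂ)) s ⊆ H ∧
    H ⊆ Metric.closedBall (-((Real.sqrt (-b) : ℝ) : ℂ)) r := by
  obtain ⟨hG1, hG2, hG3, hG4⟩ := aux_main b (Real.sqrt (-b)) (Real.sqrt (-b - 2))
    (Real.sqrt (-b + 2)) r s hb rfl rfl rfl hr hs ((Real.sqrt (-b) : ℝ) : ℂ)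
    ⟨1, Or.inl rfl, by push_cast; ring⟩ G hG
  obtain ⟨hH1, hH2, hH3, hH4⟩ := aux_main b (Real.sqrt (-b)) (Real.sqrt (-b - 2))
    (Real.sqrt (-b + 2)) r s hb rfl rfl rfl hr hs (-((Real.sqrt (-b) : ℝ) : ℂ))
    ⟨-1, Or.inr rfl, by push_cast; ring⟩ H hH
  exact ⟨hG1, hH1, hG2, hH2, hG3, hG4, hH3, hH4⟩
end

section
/- For the polynomial sequence (P_m) of the construction with each b_k a real number satisfying b_k < −6, define H̃_m = ∩_{k≥1} H^k_m. Then for every m ≥ 0: (1) H̃_m is compact and nonempty, and H̃_m = ∩_{k≥k_0} H^k_m for every k_0 ∈ ℕ; (2) P_{m+1}(H̃_m) = H̃_{m+1}; (3) H̃_m = P_{m+1}^{-1}(H̃_{m+1}) if m ≠ M_k − 1 for every k ≥ 1, while H̃_m = P_{m+1}^{-1}(H̃_{m+1}) ∩ H^k_{M_k−1} if m = M_k − 1 for some k ≥ 1. -/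
/-!
For real `b < -2` the filled set `{z : ‖z² + b‖ ≤ 2}` is the union of the two images of the
disc `D̄(0,2)` under the branches `±√(w - b)`, which lie in opposite half-planes; so
`H^k_{M_k - 1}` is a compact copy of the disc that `P_{M_k}` maps onto `D̄(0,2)`. The growth
conditions on `a_k`, `b_k`, `m_k` force a point outside `D̄(0,2)` at time `M_j` to stay outside at
all later times `M_i`, hence `H^k_{M_j} ⊆ D̄(0,2)` for `j < k`; this makes every
`P_{m+1} : H^k_m → H^k_{m+1}` surjective. The sets `H^k_m` are then compact, nonempty and
decreasing in `k`, and everything about `H̃_m` follows from Cantor's intersection theorem, applied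
also to the fibres of `P_{m+1}` to commute the image with the intersection.
-/

open Filter Set Metric
open scoped Topology

noncomputable section

section Topology

variable {X Y : Type*} [TopologicalSpace X] [TopologicalSpace Y]

theorem connectedComponentIn_union_eq_right {A B U V : Set X} {x : X} (hU : IsOpen U)
    (hV : IsOpen V) (hUV : Disjoint U V) (hAU : A ⊆ U) (hBV : B ⊆ V) (hB : IsPreconnected B)
    (hx : x ∈ B) : connectedComponentIn (A ∪ B) x = B := by
  refine subset_antisymm (fun z hz => ?_) (hB.subset_connectedComponentIn hx subset_union_right)
  have hCV : connectedComponentIn (A ∪ B) x ⊆ V :=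
    isPreconnected_connectedComponentIn.subset_right_of_subset_union hU hV hUV
      ((connectedComponentIn_subset _ _).trans (union_subset_union hAU hBV))
      ⟨x, mem_connectedComponentIn (subset_union_right hx), hBV hx⟩
  rcases connectedComponentIn_subset _ _ hz with hzA | hzB
  · exact absurd (hCV hz) (hUV.notMem_of_mem_left (hAU hzA))
  · exact hzB

variable [T2Space X]

theorem isCompact_iInter {ι : Sort*} [Nonempty ι] {K : ι → Set X} (hKc : ∀ i, IsCompact (K i)) :
    IsCompact (⋂ i, K i) :=
  let ⟨i⟩ := ‹Nonempty ι›
  (hKc i).of_isClosed_subset (isClosed_iInter fun i => (hKc i).isClosed) (iInter_subset K i)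

variable [T1Space Y] {K : ℕ → Set X}

theorem nonempty_iInter_of_antitone (hK : Antitone K) (hKc : ∀ i, IsCompact (K i))
    (hKne : ∀ i, (K i).Nonempty) : (⋂ i, K i).Nonempty :=
  IsCompact.nonempty_iInter_of_sequence_nonempty_isCompact_isClosed K (fun i => hK i.le_succ)
    hKne (hKc 0) fun i => (hKc i).isClosed

theorem image_iInter_of_antitone {f : X → Y} (hf : Continuous f) (hK : Antitone K)
    (hKc : ∀ i, IsCompact (K i)) : f '' ⋂ i, K i = ⋂ i, f '' K i := by
  refine subset_antisymm (image_iInter_subset K f) fun y hy => ?_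
  -- Cantor's intersection theorem, applied to the fibres of `f` over `y`.
  have hfib : ∀ i, (K i ∩ f ⁻¹' {y}).Nonempty := fun i => by
    obtain ⟨x, hx, rfl⟩ := mem_iInter.mp hy i
    exact ⟨x, hx, rfl⟩
  have hfibc : ∀ i, IsCompact (K i ∩ f ⁻¹' {y}) := fun i =>
    (hKc i).inter_right (isClosed_singleton.preimage hf)
  obtain ⟨x, hx⟩ := nonempty_iInter_of_antitone
    (fun i j hij => inter_subset_inter_left _ (hK hij)) hfibc hfib
  simp only [mem_iInter, mem_inter_iff, mem_preimage, mem_singleton_iff] at hx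
  exact ⟨x, mem_iInter.mpr fun i => (hx i).1, (hx 0).2⟩

end Topology

section Quadratic

theorem sq_add_surjective (c : ℂ) : Function.Surjective fun z : ℂ => z ^ 2 + c := fun w => by
  obtain ⟨z, hz⟩ := IsAlgClosed.exists_pow_nat_eq (w - c) two_pos
  exact ⟨z, by simp [hz]⟩

theorem IsCompact.preimage_sq_add {K : Set ℂ} (hK : IsCompact K) (c : ℂ) :
    IsCompact ((fun z : ℂ => z ^ 2 + c) ⁻¹' K) := by
  obtain ⟨R, hR⟩ := hK.isBounded.subset_closedBall 0
  refine Metric.isCompact_of_isClosed_isBounded (hK.isClosed.preimage (by fun_prop))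
    ((isBounded_closedBall (x := 0) (r := √(R + ‖c‖))).subset fun z hz => ?_)
  have hzR : ‖z ^ 2 + c‖ ≤ R := mem_closedBall_zero_iff.mp (hR hz)
  have hsq : ‖z‖ ^ 2 ≤ R + ‖c‖ := by
    have := norm_sub_le (z ^ 2 + c) c
    rw [add_sub_cancel_right, norm_pow] at this
    linarith
  exact mem_closedBall_zero_iff.mpr
    ((Real.le_sqrt (norm_nonneg z) ((sq_nonneg _).trans hsq)).mpr hsq)

theorem two_lt_norm_sq_pow_add {u a c : ℂ} {N : ℕ} (hu : 2 < ‖u‖) (ha : ‖a‖ ≤ 2 ^ 2 ^ N)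
    (hc : 2 + ‖c‖ ≤ (2 ^ 2 ^ N - ‖a‖) ^ 2) : 2 < ‖(u ^ 2 ^ N + a) ^ 2 + c‖ := by
  have hpow : (2 : ℝ) ^ 2 ^ N < ‖u‖ ^ 2 ^ N := pow_lt_pow_left₀ hu zero_le_two (by positivity)
  have h1 : 2 ^ 2 ^ N - ‖a‖ < ‖u ^ 2 ^ N + a‖ := by
    have := norm_sub_le (u ^ 2 ^ N + a) a
    rw [add_sub_cancel_right, norm_pow] at this
    linarith
  have h2 : (2 ^ 2 ^ N - ‖a‖) ^ 2 < ‖u ^ 2 ^ N + a‖ ^ 2 :=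
    pow_lt_pow_left₀ h1 (sub_nonneg.mpr ha) two_ne_zero
  have h3 := norm_sub_le ((u ^ 2 ^ N + a) ^ 2 + c) c
  rw [add_sub_cancel_right, norm_pow] at h3
  linarith

theorem re_cpow_inv_two_pos {x : ℂ} (hx : 0 < x.re) : 0 < (x ^ (2⁻¹ : ℂ)).re := by
  rw [Complex.cpow_inv_two_re]
  exact Real.sqrt_pos.mpr (by linarith [Complex.re_le_norm x])

variable {β : ℂ}

theorem re_sub_pos_of_mem_closedBall (hβ : β.re < -2) {w : ℂ}
    (hw : w ∈ closedBall (0 : ℂ) 2) : 0 < (w - β).re := by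
  have := (abs_le.mp ((Complex.abs_re_le_norm w).trans (mem_closedBall_zero_iff.mp hw))).1
  rw [Complex.sub_re]
  linarith

theorem continuousOn_cpow_inv_two_sub (hβ : β.re < -2) :
    ContinuousOn (fun w : ℂ => (w - β) ^ (2⁻¹ : ℂ)) (closedBall 0 2) := fun _ hw =>
  ((continuousAt_id.sub continuousAt_const).cpow continuousAt_const
    (Or.inl (re_sub_pos_of_mem_closedBall hβ hw))).continuousWithinAt

theorem preimage_sq_add (β : ℂ) (s : Set ℂ) :
    (fun z : ℂ => z ^ 2 + β) ⁻¹' s =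
      (fun w => (w - β) ^ (2⁻¹ : ℂ)) '' s ∪ (fun w => -(w - β) ^ (2⁻¹ : ℂ)) '' s := by
  ext z
  constructor
  · intro hz
    have hroot : ((z ^ 2 + β - β) ^ (2⁻¹ : ℂ)) ^ 2 = z ^ 2 := by
      rw [Complex.cpow_ofNat_inv_pow, add_sub_cancel_right]
    rcases sq_eq_sq_iff_eq_or_eq_neg.mp hroot with h | h
    · exact Or.inl ⟨_, hz, h⟩
    · exact Or.inr ⟨_, hz, show -(z ^ 2 + β - β) ^ (2⁻¹ : ℂ) = z by rw [h, neg_neg]⟩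
  · rintro (⟨w, hw, rfl⟩ | ⟨w, hw, rfl⟩) <;> simpa [Complex.cpow_ofNat_inv_pow] using hw

theorem image_sq_add_neg_cpow_inv_two (β : ℂ) (s : Set ℂ) :
    (fun z : ℂ => z ^ 2 + β) '' ((fun w => -(w - β) ^ (2⁻¹ : ℂ)) '' s) = s := by
  simp [image_image, Complex.cpow_ofNat_inv_pow]

/-- The two branches `±√(w - β)` over the disc are separated by the imaginary axis. -/
theorem connectedComponentIn_preimage_sq_add_closedBall (hβ : β.re < -2) :
    connectedComponentIn ((fun z : ℂ => z ^ 2 + β) ⁻¹' closedBall 0 2) (-(-β) ^ (2⁻¹ : ℂ)) =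
      (fun w => -(w - β) ^ (2⁻¹ : ℂ)) '' closedBall 0 2 := by
  rw [preimage_sq_add β]
  refine connectedComponentIn_union_eq_right (U := {z : ℂ | 0 < z.re}) (V := {z : ℂ | z.re < 0})
    (isOpen_Ioi.preimage Complex.continuous_re) (isOpen_Iio.preimage Complex.continuous_re)
    (disjoint_left.mpr fun z h1 h2 => lt_asymm (α := ℝ) h1 h2) ?_ ?_
    ((convex_closedBall 0 2).isPreconnected.image _ (continuousOn_cpow_inv_two_sub hβ).neg)
    ⟨0, mem_closedBall_self zero_le_two, by simp⟩
  · rintro _ ⟨w, hw, rfl⟩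
    exact re_cpow_inv_two_pos (re_sub_pos_of_mem_closedBall hβ hw)
  · rintro _ ⟨w, hw, rfl⟩
    simpa using re_cpow_inv_two_pos (re_sub_pos_of_mem_closedBall hβ hw)

theorem connectedComponentIn_preimage_sq_add_closedBall_neg_sqrt {b : ℝ} (hb : b < -2) :
    connectedComponentIn ((fun z => z ^ 2 + (b : ℂ)) ⁻¹' closedBall 0 2) (-((√(-b) : ℝ) : ℂ)) =
      (fun w : ℂ => -(w - b) ^ (2⁻¹ : ℂ)) '' closedBall 0 2 := by
  have hsqrt : ((√(-b) : ℝ) : ℂ) = (-(b : ℂ)) ^ (2⁻¹ : ℂ) := by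
    rw [Real.sqrt_eq_rpow, Complex.ofReal_cpow (by linarith)]
    norm_num
  rw [hsqrt]
  exact connectedComponentIn_preimage_sq_add_closedBall (β := b) (by simpa using hb)

end Quadratic

section seqQ

variable (P : ℕ → ℂ → ℂ) {m n : ℕ}

theorem seqQ_of_le (h : n ≤ m) : seqQ P m n = id := by
  induction n with
  | zero => rfl
  | succ n ih => simp [seqQ, h]

theorem seqQ_succ (h : m ≤ n) : seqQ P m (n + 1) = P (n + 1) ∘ seqQ P m n := by
  simp [seqQ, show ¬n + 1 ≤ m by omega]

theorem seqQ_comp_seqQ {l : ℕ} (hml : m ≤ l) (hln : l ≤ n) :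
    seqQ P l n ∘ seqQ P m l = seqQ P m n := by
  induction n, hln using Nat.le_induction with
  | base => rw [seqQ_of_le P le_rfl, Function.id_comp]
  | succ n hln ih => rw [seqQ_succ P hln, seqQ_succ P (hml.trans hln), Function.comp_assoc, ih]

end seqQ

/-- `sqCount k` is the paper's `m_k`, the number of pure squarings in the `k`-th block. -/
structure Construction where
  a : ℕ → ℂ
  b : ℕ → ℝ
  sqCount : ℕ → ℕ
  M : ℕ → ℕ
  P : ℕ → ℂ → ℂ
  H : ℕ → ℕ → Set ℂ
  hb : ∀ k, 1 ≤ k → b k < -2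
  hsqCount : ∀ k, 1 ≤ k → 1 ≤ sqCount k
  hinv1 : ∀ k, 1 ≤ k → (2 : ℝ) ^ k < 2 ^ 2 ^ sqCount k - ‖a k‖
  hinv2 : ∀ k, 1 ≤ k → (2 : ℝ) ^ k < ((2 : ℝ) ^ 2 ^ sqCount k - ‖a k‖) ^ 2 - |b k|
  hM : ∀ k, M k = ∑ j ∈ Finset.range k, (sqCount (j + 1) + 1)
  hPa : ∀ k, 1 ≤ k → P (M k - 1) = fun z => z ^ 2 + a k
  hPb : ∀ k, 1 ≤ k → P (M k) = fun z => z ^ 2 + (b k : ℂ)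
  hPother : ∀ m, 1 ≤ m → (∀ k, 1 ≤ k → m ≠ M k - 1 ∧ m ≠ M k) → P m = fun z => z ^ 2
  hHtop : ∀ k, 1 ≤ k → H k (M k - 1) =
    connectedComponentIn (P (M k) ⁻¹' closedBall 0 2) (-((Real.sqrt (-b k) : ℝ) : ℂ))
  hHdown : ∀ k, 1 ≤ k → ∀ m, m + 2 ≤ M k →
    (∀ j, 1 ≤ j → j < k → m ≠ M j - 1) → H k m = P (m + 1) ⁻¹' H k (m + 1)
  hHdown' : ∀ k, 1 ≤ k → ∀ m, m + 2 ≤ M k → ∀ j, 1 ≤ j → j < k → m = M j - 1 →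
    H k m = P (m + 1) ⁻¹' H k (m + 1) ∩ H j (M j - 1)
  hHup : ∀ k, 1 ≤ k → ∀ m, M k - 1 ≤ m → H k m = seqQ P (M k - 1) m '' H k (M k - 1)

namespace Construction

variable (S : Construction) {i j k l m n : ℕ}

theorem M_succ (k : ℕ) : S.M (k + 1) = S.M k + S.sqCount (k + 1) + 1 := by
  simp [S.hM, Finset.sum_range_succ, add_assoc]

theorem M_add_two_le (k : ℕ) : S.M k + 2 ≤ S.M (k + 1) := by
  have := S.hsqCount (k + 1) k.succ_pos
  rw [S.M_succ]
  omega

theorem M_strictMono : StrictMono S.M :=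
  strictMono_nat_of_lt_succ fun k => by have := S.M_add_two_le k; omega

theorem two_mul_le_M (k : ℕ) : 2 * k ≤ S.M k := by
  induction k with
  | zero => omega
  | succ k ih => have := S.M_add_two_le k; omega

theorem exists_P_eq_sq_add (hn : 1 ≤ n) : ∃ c, S.P n = fun z => z ^ 2 + c := by
  by_cases ha : ∃ k, 1 ≤ k ∧ n = S.M k - 1
  · obtain ⟨k, hk, rfl⟩ := ha
    exact ⟨_, S.hPa k hk⟩
  by_cases hb : ∃ k, 1 ≤ k ∧ n = S.M k
  · obtain ⟨k, hk, rfl⟩ := hb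
    exact ⟨_, S.hPb k hk⟩
  push Not at ha hb
  exact ⟨0, by simpa using S.hPother n hn fun k hk => ⟨ha k hk, hb k hk⟩⟩

theorem continuous_P (hn : 1 ≤ n) : Continuous (S.P n) := by
  obtain ⟨c, hc⟩ := S.exists_P_eq_sq_add hn
  rw [hc]
  fun_prop

theorem surjective_P (hn : 1 ≤ n) : Function.Surjective (S.P n) := by
  obtain ⟨c, hc⟩ := S.exists_P_eq_sq_add hn
  exact hc ▸ sq_add_surjective c

theorem isCompact_preimage_P (hn : 1 ≤ n) {K : Set ℂ} (hK : IsCompact K) :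
    IsCompact (S.P n ⁻¹' K) := by
  obtain ⟨c, hc⟩ := S.exists_P_eq_sq_add hn
  exact hc ▸ hK.preimage_sq_add c

theorem P_eq_sq (h₁ : S.M i < n) (h₂ : n + 1 < S.M (i + 1)) : S.P n = fun z => z ^ 2 := by
  refine S.hPother n (by omega) fun k _ => ?_
  rcases le_or_gt k i with hki | hik
  · have := S.M_strictMono.monotone hki
    omega
  · have := S.M_strictMono.monotone (show i + 1 ≤ k by omega)
    omega

theorem seqQ_M_add (i : ℕ) {t : ℕ} (ht : t < S.sqCount (i + 1)) (z : ℂ) :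
    seqQ S.P (S.M i) (S.M i + t) z = z ^ 2 ^ t := by
  induction t with
  | zero => simp [seqQ_of_le]
  | succ t ih =>
    rw [← add_assoc, seqQ_succ _ (by omega), Function.comp_apply, ih (by omega),
      S.P_eq_sq (i := i) (by omega) (by rw [S.M_succ]; omega), pow_succ, pow_mul]

theorem seqQ_M_M_succ (i : ℕ) (z : ℂ) :
    seqQ S.P (S.M i) (S.M (i + 1)) z =
      (z ^ 2 ^ S.sqCount (i + 1) + S.a (i + 1)) ^ 2 + S.b (i + 1) := by
  obtain ⟨t, ht⟩ : ∃ t, S.sqCount (i + 1) = t + 1 :=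
    Nat.exists_eq_add_one_of_ne_zero (by have := S.hsqCount (i + 1) i.succ_pos; omega)
  have hM : S.M (i + 1) = S.M i + t + 1 + 1 := by rw [S.M_succ, ht]; omega
  have hPa : S.P (S.M i + t + 1) = fun z => z ^ 2 + S.a (i + 1) := by
    rw [← S.hPa (i + 1) i.succ_pos, hM, Nat.add_sub_cancel]
  have hPb : S.P (S.M i + t + 1 + 1) = fun z => z ^ 2 + (S.b (i + 1) : ℂ) := by
    rw [← S.hPb (i + 1) i.succ_pos, hM]
  rw [hM, seqQ_succ _ (by omega), seqQ_succ _ (by omega), Function.comp_apply,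
    Function.comp_apply, S.seqQ_M_add i (by omega), hPa, hPb, ht]
  beta_reduce
  rw [← pow_mul, ← pow_succ]

theorem two_lt_norm_seqQ_M {z : ℂ} (hz : 2 < ‖z‖) (hji : j ≤ i) :
    2 < ‖seqQ S.P (S.M j) (S.M i) z‖ := by
  induction i, hji using Nat.le_induction with
  | base => rwa [seqQ_of_le _ le_rfl]
  | succ i hji ih =>
    rw [← seqQ_comp_seqQ S.P (S.M_strictMono.monotone hji)
      (S.M_strictMono.monotone i.le_succ), Function.comp_apply, seqQ_M_M_succ]
    have htwo : (2 : ℝ) ≤ 2 ^ (i + 1) := le_self_pow₀ one_le_two i.succ_ne_zero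
    have hgrowth₁ := S.hinv1 (i + 1) i.succ_pos
    have hgrowth₂ := S.hinv2 (i + 1) i.succ_pos
    refine two_lt_norm_sq_pow_add ih (by linarith) ?_
    rw [Complex.norm_real, Real.norm_eq_abs]
    linarith

theorem H_subset_preimage (hk : 1 ≤ k) (hm : m + 2 ≤ S.M k) :
    S.H k m ⊆ S.P (m + 1) ⁻¹' S.H k (m + 1) := by
  by_cases hj : ∃ j, 1 ≤ j ∧ j < k ∧ m = S.M j - 1
  · obtain ⟨j, hj1, hjk, hmj⟩ := hj
    rw [S.hHdown' k hk m hm j hj1 hjk hmj]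
    exact inter_subset_left
  · push Not at hj
    rw [S.hHdown k hk m hm hj]

theorem seqQ_mem_H (hk : 1 ≤ k) (hmn : m ≤ n) (hn : n + 1 ≤ S.M k) {z : ℂ}
    (hz : z ∈ S.H k m) : seqQ S.P m n z ∈ S.H k n := by
  induction n, hmn using Nat.le_induction with
  | base => rwa [seqQ_of_le _ le_rfl]
  | succ n hmn ih =>
    rw [seqQ_succ _ hmn]
    exact S.H_subset_preimage hk (by omega) (ih (by omega))

theorem H_M_sub_one_eq (hk : 1 ≤ k) :
    S.H k (S.M k - 1) = (fun w : ℂ => -(w - S.b k) ^ (2⁻¹ : ℂ)) '' closedBall 0 2 := by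
  rw [S.hHtop k hk, S.hPb k hk]
  exact connectedComponentIn_preimage_sq_add_closedBall_neg_sqrt (S.hb k hk)

theorem isCompact_H_M_sub_one (hk : 1 ≤ k) : IsCompact (S.H k (S.M k - 1)) := by
  rw [S.H_M_sub_one_eq hk]
  exact (isCompact_closedBall 0 2).image_of_continuousOn
    (continuousOn_cpow_inv_two_sub (by simpa using S.hb k hk)).neg

theorem image_P_M_H (hk : 1 ≤ k) : S.P (S.M k) '' S.H k (S.M k - 1) = closedBall 0 2 := by
  rw [S.H_M_sub_one_eq hk, S.hPb k hk, image_sq_add_neg_cpow_inv_two]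

theorem H_subset_closedBall (hjk : j < k) : S.H k (S.M j) ⊆ closedBall 0 2 := by
  intro z hz
  by_contra hz2
  rw [mem_closedBall_zero_iff, not_le] at hz2
  have hk : 1 ≤ k := by omega
  have hMjk : S.M j + 2 ≤ S.M k :=
    (S.M_add_two_le j).trans (S.M_strictMono.monotone (Nat.succ_le_of_lt hjk))
  have hend : S.P (S.M k) (seqQ S.P (S.M j) (S.M k - 1) z) ∈ closedBall 0 2 := by
    rw [← S.image_P_M_H hk]
    exact mem_image_of_mem _ (S.seqQ_mem_H hk (by omega) (by omega) hz)
  have hstep := seqQ_succ S.P (show S.M j ≤ S.M k - 1 by omega)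
  rw [Nat.sub_add_cancel (by omega : 1 ≤ S.M k)] at hstep
  have hesc := S.two_lt_norm_seqQ_M hz2 hjk.le
  rw [hstep, Function.comp_apply] at hesc
  exact absurd (mem_closedBall_zero_iff.mp hend) (not_le.mpr hesc)

theorem image_P_H (hk : 1 ≤ k) (m : ℕ) : S.P (m + 1) '' S.H k m = S.H k (m + 1) := by
  rcases lt_or_ge (m + 1) (S.M k) with hm | hm
  · by_cases hj : ∃ j, 1 ≤ j ∧ j < k ∧ m = S.M j - 1
    · obtain ⟨j, hj1, hjk, rfl⟩ := hj
      have hMj : S.M j - 1 + 1 = S.M j := by have := S.two_mul_le_M j; omega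
      rw [S.hHdown' k hk _ (by omega) j hj1 hjk rfl, image_preimage_inter, hMj,
        S.image_P_M_H hj1]
      exact inter_eq_left.mpr (S.H_subset_closedBall hjk)
    · push Not at hj
      rw [S.hHdown k hk m (by omega) hj]
      exact image_preimage_eq _ (S.surjective_P m.succ_pos)
  · rw [S.hHup k hk m (by omega), S.hHup k hk (m + 1) (by omega), seqQ_succ _ (by omega),
      image_comp]

theorem H_nonempty (hk : 1 ≤ k) (m : ℕ) : (S.H k m).Nonempty := by
  have hiff : ∀ n, (S.H k n).Nonempty ↔ (S.H k 0).Nonempty := fun n => by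
    induction n with
    | zero => rfl
    | succ n ih => rw [← S.image_P_H hk n, image_nonempty, ih]
  rw [hiff, ← hiff (S.M k - 1), S.H_M_sub_one_eq hk]
  exact (nonempty_closedBall.mpr zero_le_two).image _

theorem isCompact_H (hk : 1 ≤ k) (m : ℕ) : IsCompact (S.H k m) := by
  rcases le_total m (S.M k - 1) with hm | hm
  · induction hm using Nat.decreasingInduction with
    | self => exact S.isCompact_H_M_sub_one hk
    | of_succ n hn ih =>
      have hpre := S.isCompact_preimage_P n.succ_pos ih
      by_cases hj : ∃ j, 1 ≤ j ∧ j < k ∧ n = S.M j - 1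
      · obtain ⟨j, hj1, hjk, hnj⟩ := hj
        rw [S.hHdown' k hk n (by omega) j hj1 hjk hnj]
        exact hpre.inter_right (S.isCompact_H_M_sub_one hj1).isClosed
      · push Not at hj
        rwa [S.hHdown k hk n (by omega) hj]
  · induction m, hm using Nat.le_induction with
    | base => exact S.isCompact_H_M_sub_one hk
    | succ n _ ih => exact S.image_P_H hk n ▸ ih.image (S.continuous_P n.succ_pos)

theorem H_succ_subset (hk : 1 ≤ k) (m : ℕ) : S.H (k + 1) m ⊆ S.H k m := by
  have hMk := S.M_add_two_le k
  have hbase : S.H (k + 1) (S.M k - 1) ⊆ S.H k (S.M k - 1) := by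
    rw [S.hHdown' (k + 1) (by omega) _ (by omega) k hk k.lt_succ_self rfl]
    exact inter_subset_right
  rcases le_total m (S.M k - 1) with hm | hm
  · induction hm using Nat.decreasingInduction with
    | self => exact hbase
    | of_succ n hn ih =>
      by_cases hj : ∃ j, 1 ≤ j ∧ j < k ∧ n = S.M j - 1
      · obtain ⟨j, hj1, hjk, hnj⟩ := hj
        rw [S.hHdown' k hk n (by omega) j hj1 hjk hnj,
          S.hHdown' (k + 1) (by omega) n (by omega) j hj1 (by omega) hnj]
        exact inter_subset_inter_left _ (preimage_mono ih)
      · push Not at hj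
        have hj' : ∀ j, 1 ≤ j → j < k + 1 → n ≠ S.M j - 1 := fun j hj1 hjk => by
          rcases Nat.lt_succ_iff_lt_or_eq.mp hjk with hjk | rfl
          · exact hj j hj1 hjk
          · omega
        rw [S.hHdown k hk n (by omega) hj, S.hHdown (k + 1) (by omega) n (by omega) hj']
        exact preimage_mono ih
  · induction m, hm using Nat.le_induction with
    | base => exact hbase
    | succ n _ ih =>
      rw [← S.image_P_H hk, ← S.image_P_H (by omega)]
      exact image_mono ih

theorem H_subset_of_le (hk : 1 ≤ k) (hkl : k ≤ l) (m : ℕ) : S.H l m ⊆ S.H k m := by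
  induction l, hkl using Nat.le_induction with
  | base => exact subset_rfl
  | succ l hkl ih => exact (S.H_succ_subset (by omega) m).trans ih

def Htilde (m : ℕ) : Set ℂ := ⋂ k, ⋂ (_ : 1 ≤ k), S.H k m

theorem Htilde_eq_iInter (m : ℕ) : S.Htilde m = ⋂ i, S.H (i + 1) m :=
  iInter_ge_eq_iInter_nat_add _ 1

theorem antitone_H_succ (m : ℕ) : Antitone fun i => S.H (i + 1) m :=
  antitone_nat_of_succ_le fun i => S.H_succ_subset i.succ_pos m

theorem isCompact_Htilde (m : ℕ) : IsCompact (S.Htilde m) :=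
  S.Htilde_eq_iInter m ▸ isCompact_iInter fun i => S.isCompact_H i.succ_pos m

theorem Htilde_nonempty (m : ℕ) : (S.Htilde m).Nonempty :=
  S.Htilde_eq_iInter m ▸ nonempty_iInter_of_antitone (S.antitone_H_succ m)
    (fun i => S.isCompact_H i.succ_pos m) fun i => S.H_nonempty i.succ_pos m

theorem Htilde_eq_iInter_ge {k₀ : ℕ} (hk₀ : 1 ≤ k₀) (m : ℕ) :
    S.Htilde m = ⋂ k, ⋂ (_ : k₀ ≤ k), S.H k m := by
  ext z
  simp only [Htilde, mem_iInter]
  exact ⟨fun h k hk => h k (hk₀.trans hk), fun h k hk =>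
    S.H_subset_of_le hk (le_max_left k k₀) m (h _ (le_max_right k k₀))⟩

theorem image_P_Htilde (m : ℕ) : S.P (m + 1) '' S.Htilde m = S.Htilde (m + 1) := by
  rw [Htilde_eq_iInter, Htilde_eq_iInter,
    image_iInter_of_antitone (S.continuous_P m.succ_pos) (S.antitone_H_succ m)
      fun i => S.isCompact_H i.succ_pos m]
  exact iInter_congr fun i => S.image_P_H i.succ_pos m

theorem Htilde_subset_preimage (m : ℕ) : S.Htilde m ⊆ S.P (m + 1) ⁻¹' S.Htilde (m + 1) :=
  image_subset_iff.mp (S.image_P_Htilde m).le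

theorem Htilde_eq_preimage (hm : ∀ k, 1 ≤ k → m ≠ S.M k - 1) :
    S.Htilde m = S.P (m + 1) ⁻¹' S.Htilde (m + 1) := by
  refine subset_antisymm (S.Htilde_subset_preimage m) fun z hz => ?_
  simp only [Htilde, mem_iInter, mem_preimage] at hz ⊢
  intro k hk
  have hl : m + 2 ≤ S.M (max k (m + 1)) := by
    have := S.two_mul_le_M (max k (m + 1))
    omega
  refine S.H_subset_of_le hk (le_max_left k (m + 1)) m ?_
  rw [S.hHdown _ (by omega) m hl fun j hj _ => hm j hj]
  exact hz _ (by omega)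

theorem Htilde_eq_preimage_inter (hk : 1 ≤ k) :
    S.Htilde (S.M k - 1) =
      S.P (S.M k - 1 + 1) ⁻¹' S.Htilde (S.M k - 1 + 1) ∩ S.H k (S.M k - 1) := by
  refine subset_antisymm (subset_inter (S.Htilde_subset_preimage _) (biInter_subset_of_mem hk)) ?_
  rintro z ⟨hz, hzk⟩
  simp only [Htilde, mem_iInter, mem_preimage] at hz ⊢
  intro l hl
  rcases le_or_gt l k with hlk | hkl
  · exact S.H_subset_of_le hl hlk _ hzk
  · have := S.M_add_two_le k
    have := S.M_strictMono.monotone (show k + 1 ≤ l by omega)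
    rw [S.hHdown' l hl _ (by omega) k hk hkl rfl]
    exact ⟨hz l hl, hzk⟩

end Construction

theorem Htilde_invariance_general
    (a : ℕ → ℂ) (b : ℕ → ℝ) (mk : ℕ → ℕ) (M : ℕ → ℕ)
    (hb : ∀ k, 1 ≤ k → b k < -6)
    (hmk : ∀ k, 1 ≤ k → 1 ≤ mk k)
    (hinv1 : ∀ k, 1 ≤ k → (2 : ℝ) ^ k < 2 ^ 2 ^ mk k - ‖a k‖)
    (hinv2 : ∀ k, 1 ≤ k →
      (2 : ℝ) ^ k < ((2 : ℝ) ^ 2 ^ mk k - ‖a k‖) ^ 2 - |b k|)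
    (hM : ∀ k, M k = ∑ j ∈ Finset.range k, (mk (j + 1) + 1))
    (P : ℕ → ℂ → ℂ)
    (hPa : ∀ k, 1 ≤ k → P (M k - 1) = fun z => z ^ 2 + a k)
    (hPb : ∀ k, 1 ≤ k → P (M k) = fun z => z ^ 2 + (b k : ℂ))
    (hPother : ∀ m, 1 ≤ m → (∀ k, 1 ≤ k → m ≠ M k - 1 ∧ m ≠ M k) →
      P m = fun z => z ^ 2)
    (H : ℕ → ℕ → Set ℂ)
    (hHtop : ∀ k, 1 ≤ k → H k (M k - 1) =
      connectedComponentIn (P (M k) ⁻¹' Metric.closedBall 0 2)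
        (-((Real.sqrt (-b k) : ℝ) : ℂ)))
    (hHdown : ∀ k, 1 ≤ k → ∀ m, m + 2 ≤ M k →
      (∀ j, 1 ≤ j → j < k → m ≠ M j - 1) → H k m = P (m + 1) ⁻¹' H k (m + 1))
    (hHdown' : ∀ k, 1 ≤ k → ∀ m, m + 2 ≤ M k → ∀ j, 1 ≤ j → j < k → m = M j - 1 →
      H k m = P (m + 1) ⁻¹' H k (m + 1) ∩ H j (M j - 1))
    (hHup : ∀ k, 1 ≤ k → ∀ m, M k - 1 ≤ m → H k m = seqQ P (M k - 1) m '' H k (M k - 1))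
    (Ht : ℕ → Set ℂ)
    (hHt : ∀ m, Ht m = ⋂ k, ⋂ (_ : 1 ≤ k), H k m) :
    ∀ m : ℕ,
      (IsCompact (Ht m) ∧ (Ht m).Nonempty ∧
        ∀ k₀ : ℕ, 1 ≤ k₀ → Ht m = ⋂ k, ⋂ (_ : k₀ ≤ k), H k m) ∧
      (P (m + 1) '' Ht m = Ht (m + 1)) ∧
      ((∀ k, 1 ≤ k → m ≠ M k - 1) → Ht m = P (m + 1) ⁻¹' Ht (m + 1)) ∧
      (∀ k, 1 ≤ k → m = M k - 1 →
        Ht m = P (m + 1) ⁻¹' Ht (m + 1) ∩ H k (M k - 1)) := by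
  let S : Construction := ⟨a, b, mk, M, P, H, fun k hk => (hb k hk).trans (by norm_num), hmk, hinv1,
    hinv2, hM, hPa, hPb, hPother, hHtop, hHdown, hHdown', hHup⟩
  obtain rfl : Ht = S.Htilde := funext hHt
  intro m
  refine ⟨⟨S.isCompact_Htilde m, S.Htilde_nonempty m, fun k₀ hk₀ => S.Htilde_eq_iInter_ge hk₀ m⟩,
    S.image_P_Htilde m, S.Htilde_eq_preimage, ?_⟩
  rintro k hk rfl
  exact S.Htilde_eq_preimage_inter hk

/-- For the constructed polynomial sequence (with `b k < −6` real), the sets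
`H̃_m = ⋂_{k≥1} H^k_m` are compact and nonempty, equal the tail intersections
`⋂_{k≥k₀} H^k_m`, satisfy `P_{m+1}(H̃_m) = H̃_{m+1}`, and satisfy the stated backward
invariance properties. -/
theorem Htilde_invariance
    (a : ℕ → ℂ) (b : ℕ → ℝ) (mk : ℕ → ℕ) (M : ℕ → ℕ)
    (hb : ∀ k, 1 ≤ k → b k < -6)
    (hmk : ∀ k, 1 ≤ k → 1 ≤ mk k)
    (hinv1 : ∀ k, 1 ≤ k → (2 : ℝ) ^ k < 2 ^ 2 ^ mk k - ‖a k‖)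
    (hinv2 : ∀ k, 1 ≤ k →
      (2 : ℝ) ^ k < ((2 : ℝ) ^ 2 ^ mk k - ‖a k‖) ^ 2 - |b k|)
    (hM : ∀ k, M k = ∑ j ∈ Finset.range k, (mk (j + 1) + 1))
    (P : ℕ → ℂ → ℂ)
    (hPa : ∀ k, 1 ≤ k → P (M k - 1) = fun z => z ^ 2 + a k)
    (hPb : ∀ k, 1 ≤ k → P (M k) = fun z => z ^ 2 + (b k : ℂ))
    (hPother : ∀ m, 1 ≤ m → (∀ k, 1 ≤ k → m ≠ M k - 1 ∧ m ≠ M k) →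
      P m = fun z => z ^ 2)
    (G H : ℕ → ℕ → Set ℂ)
    (hGtop : ∀ k, 1 ≤ k → G k (M k - 1) =
      connectedComponentIn (P (M k) ⁻¹' Metric.closedBall 0 2)
        ((Real.sqrt (-b k) : ℝ) : ℂ))
    (hHtop : ∀ k, 1 ≤ k → H k (M k - 1) =
      connectedComponentIn (P (M k) ⁻¹' Metric.closedBall 0 2)
        (-((Real.sqrt (-b k) : ℝ) : ℂ)))
    (hGdown : ∀ k, 1 ≤ k → ∀ m, m + 2 ≤ M k →
      (∀ j, 1 ≤ j → j < k → m ≠ M j - 1) → G k m = P (m + 1) ⁻¹' G k (m + 1))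
    (hGdown' : ∀ k, 1 ≤ k → ∀ m, m + 2 ≤ M k → ∀ j, 1 ≤ j → j < k → m = M j - 1 →
      G k m = P (m + 1) ⁻¹' G k (m + 1) ∩ G j (M j - 1))
    (hHdown : ∀ k, 1 ≤ k → ∀ m, m + 2 ≤ M k →
      (∀ j, 1 ≤ j → j < k → m ≠ M j - 1) → H k m = P (m + 1) ⁻¹' H k (m + 1))
    (hHdown' : ∀ k, 1 ≤ k → ∀ m, m + 2 ≤ M k → ∀ j, 1 ≤ j → j < k → m = M j - 1 →
      H k m = P (m + 1) ⁻¹' H k (m + 1) ∩ H j (M j - 1))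
    (hGup : ∀ k, 1 ≤ k → ∀ m, M k - 1 ≤ m → G k m = seqQ P (M k - 1) m '' G k (M k - 1))
    (hHup : ∀ k, 1 ≤ k → ∀ m, M k - 1 ≤ m → H k m = seqQ P (M k - 1) m '' H k (M k - 1))
    (Ht : ℕ → Set ℂ)
    (hHt : ∀ m, Ht m = ⋂ k, ⋂ (_ : 1 ≤ k), H k m) :
    ∀ m : ℕ,
      (IsCompact (Ht m) ∧ (Ht m).Nonempty ∧
        ∀ k₀ : ℕ, 1 ≤ k₀ → Ht m = ⋂ k, ⋂ (_ : k₀ ≤ k), H k m) ∧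
      (P (m + 1) '' Ht m = Ht (m + 1)) ∧
      ((∀ k, 1 ≤ k → m ≠ M k - 1) → Ht m = P (m + 1) ⁻¹' Ht (m + 1)) ∧
      (∀ k, 1 ≤ k → m = M k - 1 →
        Ht m = P (m + 1) ⁻¹' Ht (m + 1) ∩ H k (M k - 1)) :=
  Htilde_invariance_general a b mk M hb hmk hinv1 hinv2 hM P hPa hPb hPother H hHtop hHdown hHdown'
    hHup Ht hHt
end
end

section
/- Let b < −6 be real and let n ≥ 1 be an integer with 2^{2^n} ≥ 8√(−b). Define f(z) = z^{2^n} − √(−b), g(z) = z² + b, and Q = g ∘ f, and let H be the connected component of g^{-1}(D̄(0,2)) containing −√(−b). Then: (1) Q^{-1}(Ā(0,1/2,2)) ⊆ Ā(0,1/2,2), where Ā(0,1/2,2) = {z ∈ ℂ : 1/2 ≤ |z| ≤ 2}; (2) D(0,1/2) ⊆ Q^{-1}(D(0,1/2)); (3) D(0,1/2) ⊆ f^{-1}(H). -/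
/-!
With `w = z ^ 2 ^ n` and `c = √(-b)` one has `Q z = (w - c) ^ 2 + b = w (w - 2c)`. The hypothesis
`8c ≤ 2 ^ 2 ^ n` makes `|w| < 2 ^ (-2 ^ n)` so small on `D(0,1/2)` that `|Q| < 1/2` there, and
`|w| > 2 ^ 2 ^ n` so large outside `D̄(0,2)` that `|Q| > 2` there; (1) is the contrapositive of
these two bounds. For (3), `f (D(0,1/2))` is connected, contains `f 0 = -c` and lies in
`g⁻¹(D(0,1/2)) ⊆ g⁻¹(D̄(0,2))`.
-/

theorem sub_sq_add_eq_mul_sub_two_mul {R : Type*} [CommRing R] {b c : R} (hc : c ^ 2 = -b)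
    (w : R) : (w - c) ^ 2 + b = w * (w - 2 * c) := by
  linear_combination hc

theorem norm_pow_mul_pow_sub_two_mul_lt_half {k : ℕ} (hk : k ≠ 0) {c z : ℂ}
    (hc : 8 * ‖c‖ ≤ 2 ^ k) (hz : ‖z‖ < 1 / 2) : ‖z ^ k * (z ^ k - 2 * c)‖ < 1 / 2 := by
  have ht : (2 : ℝ) ≤ 2 ^ k := le_self_pow₀ one_le_two hk
  have hw : ‖z ^ k‖ * 2 ^ k < 1 := by
    rw [norm_pow, ← mul_pow]
    exact pow_lt_one₀ (by positivity) (by linarith) hk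
  have hsub : ‖z ^ k - 2 * c‖ ≤ ‖z ^ k‖ + 2 * ‖c‖ := by
    simpa [norm_mul] using norm_sub_le (z ^ k) (2 * c)
  have hw_half : ‖z ^ k‖ < 1 / 2 := by nlinarith [norm_nonneg (z ^ k)]
  have hwc : 8 * (‖z ^ k‖ * ‖c‖) < 1 := by nlinarith [norm_nonneg (z ^ k)]
  calc ‖z ^ k * (z ^ k - 2 * c)‖ ≤ ‖z ^ k‖ * (‖z ^ k‖ + 2 * ‖c‖) := by
        rw [norm_mul]; gcongr
    _ < 1 / 2 := by nlinarith [norm_nonneg (z ^ k)]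

theorem two_lt_norm_pow_mul_pow_sub_two_mul {k : ℕ} (hk : k ≠ 0) {c z : ℂ}
    (hc : 8 * ‖c‖ ≤ 2 ^ k) (hz : 2 < ‖z‖) : 2 < ‖z ^ k * (z ^ k - 2 * c)‖ := by
  have ht : (2 : ℝ) ≤ 2 ^ k := le_self_pow₀ one_le_two hk
  have hw : (2 : ℝ) ^ k < ‖z ^ k‖ := by
    rw [norm_pow]
    exact pow_lt_pow_left₀ hz zero_le_two hk
  have hsub : ‖z ^ k‖ - 2 * ‖c‖ ≤ ‖z ^ k - 2 * c‖ := by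
    simpa [norm_mul] using norm_sub_norm_le (z ^ k) (2 * c)
  rw [norm_mul]
  nlinarith [norm_nonneg c]

theorem invariant_annulus_and_disc_general
    (b : ℝ) (hb : b < -6) (n : ℕ)
    (h2n : 8 * Real.sqrt (-b) ≤ (2 : ℝ) ^ 2 ^ n)
    (f g Q : ℂ → ℂ)
    (hf : f = fun z : ℂ => z ^ 2 ^ n - ((Real.sqrt (-b) : ℝ) : ℂ))
    (hg : g = fun z : ℂ => z ^ 2 + (b : ℂ))
    (hQ : Q = g ∘ f)
    (H : Set ℂ)
    (hH : H = connectedComponentIn (g ⁻¹' Metric.closedBall 0 2)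
      (-((Real.sqrt (-b) : ℝ) : ℂ))) :
    Q ⁻¹' {z : ℂ | 1 / 2 ≤ ‖z‖ ∧ ‖z‖ ≤ 2} ⊆
      {z : ℂ | 1 / 2 ≤ ‖z‖ ∧ ‖z‖ ≤ 2} ∧
    Metric.ball (0 : ℂ) (1 / 2) ⊆ Q ⁻¹' Metric.ball (0 : ℂ) (1 / 2) ∧
    Metric.ball (0 : ℂ) (1 / 2) ⊆ f ⁻¹' H := by
  subst hf hg hQ hH
  set c : ℂ := ((Real.sqrt (-b) : ℝ) : ℂ)
  have hk : 2 ^ n ≠ 0 := pow_ne_zero n two_ne_zero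
  have hc : 8 * ‖c‖ ≤ 2 ^ 2 ^ n := by
    rwa [Complex.norm_real, Real.norm_of_nonneg (Real.sqrt_nonneg _)]
  have hc_sq : c ^ 2 = -(b : ℂ) := by
    rw [← Complex.ofReal_pow, Real.sq_sqrt (by linarith)]
    push_cast; rfl
  have hQ_eq (z : ℂ) : (z ^ 2 ^ n - c) ^ 2 + (b : ℂ) = z ^ 2 ^ n * (z ^ 2 ^ n - 2 * c) :=
    sub_sq_add_eq_mul_sub_two_mul hc_sq _
  have hdisc (z : ℂ) (hz : ‖z‖ < 1 / 2) : ‖(z ^ 2 ^ n - c) ^ 2 + (b : ℂ)‖ < 1 / 2 := by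
    rw [hQ_eq]; exact norm_pow_mul_pow_sub_two_mul_lt_half hk hc hz
  refine ⟨fun z ⟨hQ_lo, hQ_hi⟩ => ⟨not_lt.1 fun hz => ?_, not_lt.1 fun hz => ?_⟩,
    fun z hz => by simpa using hdisc z (by simpa using hz), ?_⟩
  · exact (hdisc z hz).not_ge hQ_lo
  · exact (two_lt_norm_pow_mul_pow_sub_two_mul hk hc hz).not_ge ((hQ_eq z).symm ▸ hQ_hi)
  have himage_sub : (fun z : ℂ => z ^ 2 ^ n - c) '' Metric.ball 0 (1 / 2) ⊆
      (fun z : ℂ => z ^ 2 + (b : ℂ)) ⁻¹' Metric.closedBall 0 2 := by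
    rintro _ ⟨z, hz, rfl⟩
    have := hdisc z (by simpa using hz)
    simp only [Set.mem_preimage, mem_closedBall_zero_iff]
    linarith
  have himage_conn : IsPreconnected ((fun z : ℂ => z ^ 2 ^ n - c) '' Metric.ball 0 (1 / 2)) :=
    (convex_ball (0 : ℂ) _).isPreconnected.image _ (by fun_prop)
  have hcenter : -c ∈ (fun z : ℂ => z ^ 2 ^ n - c) '' Metric.ball 0 (1 / 2) :=
    ⟨0, by simp, by simp [zero_pow hk]⟩
  exact fun z hz => himage_conn.subset_connectedComponentIn hcenter himage_sub ⟨z, hz, rfl⟩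

/-- Let `b < −6` and `n ≥ 1` with `2^{2^n} ≥ 8√(−b)`. With `f(z) = z^{2^n} − √(−b)`,
`g(z) = z² + b`, `Q = g ∘ f`, and `H` the connected component of `g⁻¹(D̄(0,2))` containing
`−√(−b)`: (1) `Q⁻¹(Ā(0,1/2,2)) ⊆ Ā(0,1/2,2)`; (2) `D(0,1/2) ⊆ Q⁻¹(D(0,1/2))`;
(3) `D(0,1/2) ⊆ f⁻¹(H)`. -/
theorem invariant_annulus_and_disc
    (b : ℝ) (hb : b < -6) (n : ℕ) (hn : 1 ≤ n)
    (h2n : 8 * Real.sqrt (-b) ≤ (2 : ℝ) ^ 2 ^ n)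
    (f g Q : ℂ → ℂ)
    (hf : f = fun z : ℂ => z ^ 2 ^ n - ((Real.sqrt (-b) : ℝ) : ℂ))
    (hg : g = fun z : ℂ => z ^ 2 + (b : ℂ))
    (hQ : Q = g ∘ f)
    (H : Set ℂ)
    (hH : H = connectedComponentIn (g ⁻¹' Metric.closedBall 0 2)
      (-((Real.sqrt (-b) : ℝ) : ℂ))) :
    Q ⁻¹' {z : ℂ | 1 / 2 ≤ ‖z‖ ∧ ‖z‖ ≤ 2} ⊆
      {z : ℂ | 1 / 2 ≤ ‖z‖ ∧ ‖z‖ ≤ 2} ∧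
    Metric.ball (0 : ℂ) (1 / 2) ⊆ Q ⁻¹' Metric.ball (0 : ℂ) (1 / 2) ∧
    Metric.ball (0 : ℂ) (1 / 2) ⊆ f ⁻¹' H :=
  invariant_annulus_and_disc_general b hb n h2n f g Q hf hg hQ H hH
end

section
/- Let b < −6 be real, let n ≥ 0 be an integer, and define Q(z) = (z^{2^n} − √(−b))² + b. Then every w ∈ ℂ with 1/3 < |Q(w)| < 3 satisfies Q'(w) ≠ 0 and |Q'(w)| > 2^{n+1}/(12√(−b)); in particular |Q'(w)| > 1/(6√(−b)), and if moreover 2^n ≥ 12√(−b), then |Q'(w)| > 2 (so any locally defined inverse branch of Q has derivative of absolute value less than 6√(−b), respectively less than 1/2, at points of the annulus {1/3 < |z| < 3}). -/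
/-!
With `s = √(-b)` and `u = w ^ 2 ^ n` we have `Q w = u (u - 2s)` and
`Q' w = 2 ^ (n + 1) (u - s) w ^ (2 ^ n - 1)`. Since `|b| > 6` while `|Q w| < 3`,
`|u - s|² = |Q w - b| > 3`, so `|u - s| > 1`; this settles the case `|w| ≥ 1`. If `|w| < 1`, then
`|w| ^ (2 ^ n - 1) ≥ |u|`, and `|u| |u - s| (1 + s) ≥ |u| |u - 2s| = |Q w| > 1/3`.
-/

theorem deriv_sub_pow_sq_add {𝕜 : Type*} [NontriviallyNormedField 𝕜] (N : ℕ) (c d w : 𝕜) :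
    deriv (fun z => (z ^ N - c) ^ 2 + d) w = 2 * (w ^ N - c) * (N * w ^ (N - 1)) :=
  ((((hasDerivAt_pow N w).sub_const c).pow 2).add_const d).deriv.trans (by norm_num)

theorem div_one_add_norm_lt_norm_mul_norm_sub {R : Type*} [SeminormedRing R] {u c : R} {ε : ℝ}
    (hfar : 1 ≤ ‖u - c‖) (h : ε < ‖u * (u - 2 * c)‖) : ε / (1 + ‖c‖) < ‖u‖ * ‖u - c‖ := by
  have hle : ‖u * (u - 2 * c)‖ ≤ ‖u‖ * ‖u - c‖ * (1 + ‖c‖) :=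
    calc ‖u * (u - 2 * c)‖ ≤ ‖u‖ * ‖(u - c) - c‖ := by rw [sub_sub, ← two_mul]; exact norm_mul_le _ _
      _ ≤ ‖u‖ * (‖u - c‖ + ‖c‖) := by gcongr; exact norm_sub_le _ _
      _ ≤ ‖u‖ * (‖u - c‖ * (1 + ‖c‖)) := by gcongr; nlinarith [norm_nonneg c]
      _ = ‖u‖ * ‖u - c‖ * (1 + ‖c‖) := by ring
  rw [div_lt_iff₀ (by positivity)]
  linarith

theorem min_one_pow_le_pow_sub_one {x : ℝ} (hx : 0 ≤ x) (N : ℕ) : min 1 (x ^ N) ≤ x ^ (N - 1) := by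
  rcases le_total 1 x with h1 | h1
  · exact (min_le_left _ _).trans (one_le_pow₀ h1)
  · exact (min_le_right _ _).trans (pow_le_pow_of_le_one hx h1 (Nat.sub_le N 1))

theorem min_lt_norm_sub_mul_norm_pow_sub_one {K : Type*} [NormedField K] {w c : K} {N : ℕ}
    {ε : ℝ} (hfar : 1 < ‖w ^ N - c‖) (h : ε < ‖w ^ N * (w ^ N - 2 * c)‖) :
    min 1 (ε / (1 + ‖c‖)) < ‖w ^ N - c‖ * ‖w‖ ^ (N - 1) :=
  calc min 1 (ε / (1 + ‖c‖))
      < min ‖w ^ N - c‖ (‖w ^ N‖ * ‖w ^ N - c‖) :=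
        min_lt_min hfar (div_one_add_norm_lt_norm_mul_norm_sub hfar.le h)
    _ = ‖w ^ N - c‖ * min 1 (‖w‖ ^ N) := by
        rw [mul_min_of_nonneg _ _ (norm_nonneg _), mul_one, norm_pow, mul_comm]
    _ ≤ ‖w ^ N - c‖ * ‖w‖ ^ (N - 1) := by
        gcongr; exact min_one_pow_le_pow_sub_one (norm_nonneg w) N

theorem two_pow_succ_div_lt_norm_deriv {b : ℝ} (hb : b < -6) (n : ℕ) {w : ℂ}
    (hlo : 1 / 3 < ‖(w ^ 2 ^ n - ((√(-b) : ℝ) : ℂ)) ^ 2 + (b : ℂ)‖)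
    (hhi : ‖(w ^ 2 ^ n - ((√(-b) : ℝ) : ℂ)) ^ 2 + (b : ℂ)‖ < 3) :
    (2 : ℝ) ^ (n + 1) / (12 * √(-b)) <
      ‖deriv (fun z : ℂ => (z ^ 2 ^ n - ((√(-b) : ℝ) : ℂ)) ^ 2 + (b : ℂ)) w‖ := by
  set s := √(-b)
  have hs : s ^ 2 = -b := Real.sq_sqrt (by linarith)
  have hs0 : 0 ≤ s := Real.sqrt_nonneg _
  have hs2 : 2 < s := by nlinarith
  set c : ℂ := (s : ℂ)
  set u := w ^ 2 ^ n
  have hc : ‖c‖ = s := by simp [c, abs_of_nonneg hs0]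
  have hbc : (b : ℂ) = -c ^ 2 := by simp [c, ← Complex.ofReal_pow, hs]
  have hQ : (u - c) ^ 2 + b = (u - c) ^ 2 - c ^ 2 := by rw [hbc]; ring
  have hfar : 1 < ‖u - c‖ := by
    have := norm_sub_le ((u - c) ^ 2) ((u - c) ^ 2 - c ^ 2)
    rw [sub_sub_cancel, norm_pow, norm_pow, hc, ← hQ] at this
    nlinarith [norm_nonneg (u - c)]
  have hkey := min_lt_norm_sub_mul_norm_pow_sub_one (ε := 1 / 3) hfar
    (by rwa [show u * (u - 2 * c) = (u - c) ^ 2 + b by rw [hQ]; ring] : 1 / 3 < ‖u * (u - 2 * c)‖)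
  have hnorm : ‖deriv (fun z : ℂ => (z ^ 2 ^ n - c) ^ 2 + (b : ℂ)) w‖
      = 2 ^ (n + 1) * (‖u - c‖ * ‖w‖ ^ (2 ^ n - 1)) := by
    rw [deriv_sub_pow_sq_add]
    simp only [norm_mul, norm_pow, Complex.norm_two, Nat.cast_pow, Nat.cast_ofNat]
    ring
  rw [hnorm]
  calc (2 : ℝ) ^ (n + 1) / (12 * s) = 2 ^ (n + 1) * (1 / (12 * s)) := by ring
    _ ≤ 2 ^ (n + 1) * min 1 (1 / 3 / (1 + ‖c‖)) := by
        gcongr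
        rw [hc]
        apply le_min
        · rw [div_le_one (by positivity)]; linarith
        · rw [div_div, div_le_div_iff_of_pos_left one_pos (by positivity) (by positivity)]; linarith
    _ < 2 ^ (n + 1) * (‖u - c‖ * ‖w‖ ^ (2 ^ n - 1)) := by gcongr

/-- Let `b < −6` be real, `n ≥ 0`, and `Q(z) = (z^{2^n} − √(−b))² + b`. Then every `w` with
`1/3 < |Q(w)| < 3` satisfies `Q'(w) ≠ 0` and `|Q'(w)| > 2^{n+1}/(12√(−b))`; in particular
`|Q'(w)| > 1/(6√(−b))`, and if moreover `2^n ≥ 12√(−b)` then `|Q'(w)| > 2`. -/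
theorem deriv_lower_bound_on_annulus
    (b : ℝ) (hb : b < -6) (n : ℕ)
    (Q : ℂ → ℂ)
    (hQ : Q = fun z : ℂ => (z ^ 2 ^ n - ((Real.sqrt (-b) : ℝ) : ℂ)) ^ 2 + (b : ℂ)) :
    ∀ w : ℂ, 1 / 3 < ‖Q w‖ → ‖Q w‖ < 3 →
      deriv Q w ≠ 0 ∧
      (2 : ℝ) ^ (n + 1) / (12 * Real.sqrt (-b)) < ‖deriv Q w‖ ∧
      1 / (6 * Real.sqrt (-b)) < ‖deriv Q w‖ ∧
      (12 * Real.sqrt (-b) ≤ (2 : ℝ) ^ n → 2 < ‖deriv Q w‖) := by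
  intro w hlo hhi
  subst hQ
  have hbound := two_pow_succ_div_lt_norm_deriv hb n hlo hhi
  have hs : 0 < √(-b) := Real.sqrt_pos.2 (by linarith)
  refine ⟨fun h0 => ?_, hbound, ?_, fun hn => ?_⟩
  · rw [h0, norm_zero] at hbound
    exact hbound.not_gt (by positivity)
  · refine lt_of_le_of_lt ?_ hbound
    calc 1 / (6 * √(-b)) = 2 ^ 1 / (12 * √(-b)) := by field_simp; norm_num
      _ ≤ 2 ^ (n + 1) / (12 * √(-b)) := by gcongr <;> norm_num
  · refine lt_of_le_of_lt ?_ hbound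
    rw [le_div_iff₀ (by positivity), pow_succ]
    linarith
end
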